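/- arXiv:2509.25553 — 6 statements merged into one kernel-verified Lean document; each statement's English description precedes it below -/
import Mathlib

section
/- Let U ⊆ ℝ² be open, let λ : ℝ → ℝ satisfy λ(y) ≠ 0 for all (x,y) ∈ U, and let w : ℝ² → ℝ be three times continuously differentiable on U satisfying w_xx·w_yy − (w_xy)² = −λ(y)² on U. Define the vector field v = (−w_xy·w_yy/(2λ(y)²), 1). Then at every point of U, the directional derivative of w_xx along v satisfies v·∇(w_xx) = ((w_xy·w_xyy − 2·w_yy·w_xxy)/(2λ(y)²))·w_xx; that is, −(w_xy·w_yy/(2λ(y)²))·w_xxx + w_xxy = ((w_xy·w_xyy − 2·w_yy·w_xxy)/(2λ(y)²))·w_xx. -/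
/-- Partial derivative with respect to the first variable. -/
noncomputable def pd1 (f : ℝ → ℝ → ℝ) (x y : ℝ) : ℝ := deriv (fun x' => f x' y) x

/-- Partial derivative with respect to the second variable. -/
noncomputable def pd2 (f : ℝ → ℝ → ℝ) (x y : ℝ) : ℝ := deriv (fun y' => f x y') y

/-!
Differentiating the Monge–Ampère equation in `x`, where `λ(y)` is constant, gives
`w_xxx w_yy + w_xx w_xyy - 2 w_xy w_xxy = 0`; here the symmetry of the third derivatives of the
`C³` function `w` identifies `∂ₓ w_yy` with `w_xyy` and `∂ₓ w_xy` with `w_xxy`. After substituting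
`λ² = w_xy² - w_xx w_yy`, the claimed identity times `2λ²` is `-w_xy` times this relation.
-/

open Filter Topology Function

section PartialDerivatives

variable {g h : ℝ → ℝ → ℝ} {p : ℝ × ℝ} {U : Set (ℝ × ℝ)}

lemma hasDerivAt_slice_fst (hg : DifferentiableAt ℝ (uncurry g) p) :
    HasDerivAt (fun t => g t p.2) (fderiv ℝ (uncurry g) p (1, 0)) p.1 :=
  hg.hasFDerivAt.comp_hasDerivAt (f := fun t : ℝ => (t, p.2)) p.1
    ((hasDerivAt_id _).prodMk (hasDerivAt_const _ _))

lemma hasDerivAt_slice_snd (hg : DifferentiableAt ℝ (uncurry g) p) :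
    HasDerivAt (fun t => g p.1 t) (fderiv ℝ (uncurry g) p (0, 1)) p.2 :=
  hg.hasFDerivAt.comp_hasDerivAt (f := fun t : ℝ => (p.1, t)) p.2
    ((hasDerivAt_const _ _).prodMk (hasDerivAt_id _))

lemma pd1_eq_fderiv (hg : DifferentiableAt ℝ (uncurry g) p) :
    pd1 g p.1 p.2 = fderiv ℝ (uncurry g) p (1, 0) :=
  (hasDerivAt_slice_fst hg).deriv

lemma pd2_eq_fderiv (hg : DifferentiableAt ℝ (uncurry g) p) :
    pd2 g p.1 p.2 = fderiv ℝ (uncurry g) p (0, 1) :=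
  (hasDerivAt_slice_snd hg).deriv

lemma hasDerivAt_pd1 (hg : DifferentiableAt ℝ (uncurry g) p) :
    HasDerivAt (fun t => g t p.2) (pd1 g p.1 p.2) p.1 :=
  pd1_eq_fderiv hg ▸ hasDerivAt_slice_fst hg

lemma pd1_congr (hgh : uncurry g =ᶠ[𝓝 p] uncurry h) : pd1 g p.1 p.2 = pd1 h p.1 p.2 :=
  (hgh.comp_tendsto ((Continuous.prodMk_left p.2).tendsto' p.1 p rfl)).deriv_eq

lemma pd2_congr (hgh : uncurry g =ᶠ[𝓝 p] uncurry h) : pd2 g p.1 p.2 = pd2 h p.1 p.2 :=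
  (hgh.comp_tendsto ((Continuous.prodMk_right p.1).tendsto' p.2 p rfl)).deriv_eq

lemma eventuallyEq_pd1_fderiv (hU : IsOpen U) (hg : DifferentiableOn ℝ (uncurry g) U)
    (hp : p ∈ U) : uncurry (pd1 g) =ᶠ[𝓝 p] fun q => fderiv ℝ (uncurry g) q (1, 0) := by
  filter_upwards [hU.mem_nhds hp] with q hq
    using pd1_eq_fderiv (hg.differentiableAt (hU.mem_nhds hq))

lemma eventuallyEq_pd2_fderiv (hU : IsOpen U) (hg : DifferentiableOn ℝ (uncurry g) U)
    (hp : p ∈ U) : uncurry (pd2 g) =ᶠ[𝓝 p] fun q => fderiv ℝ (uncurry g) q (0, 1) := by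
  filter_upwards [hU.mem_nhds hp] with q hq
    using pd2_eq_fderiv (hg.differentiableAt (hU.mem_nhds hq))

variable {m n : WithTop ℕ∞}

lemma contDiffOn_pd1 (hU : IsOpen U) (hg : ContDiffOn ℝ n (uncurry g) U) (hmn : m + 1 ≤ n) :
    ContDiffOn ℝ m (uncurry (pd1 g)) U := by
  have hn : n ≠ 0 := ne_bot_of_le_ne_bot (by simp) hmn
  refine ((hg.fderiv_of_isOpen hU hmn).clm_apply (contDiffOn_const (c := ((1 : ℝ), (0 : ℝ))))).congr
    fun q hq => ?_
  exact (eventuallyEq_pd1_fderiv hU (hg.differentiableOn hn) hq).eq_of_nhds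

lemma contDiffOn_pd2 (hU : IsOpen U) (hg : ContDiffOn ℝ n (uncurry g) U) (hmn : m + 1 ≤ n) :
    ContDiffOn ℝ m (uncurry (pd2 g)) U := by
  have hn : n ≠ 0 := ne_bot_of_le_ne_bot (by simp) hmn
  refine ((hg.fderiv_of_isOpen hU hmn).clm_apply (contDiffOn_const (c := ((0 : ℝ), (1 : ℝ))))).congr
    fun q hq => ?_
  exact (eventuallyEq_pd2_fderiv hU (hg.differentiableOn hn) hq).eq_of_nhds

lemma pd1_pd2_comm (hU : IsOpen U) (hg : ContDiffOn ℝ 2 (uncurry g) U) (hp : p ∈ U) :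
    pd1 (pd2 g) p.1 p.2 = pd2 (pd1 g) p.1 p.2 := by
  set G := uncurry g
  have hG' : DifferentiableAt ℝ (fderiv ℝ G) p :=
    ((hg.fderiv_of_isOpen hU (m := 1) le_rfl).contDiffAt (hU.mem_nhds hp)).differentiableAt
      one_ne_zero
  have hG : DifferentiableOn ℝ G U := hg.differentiableOn two_ne_zero
  have hsymm : IsSymmSndFDerivAt ℝ G p :=
    (hg.contDiffAt (hU.mem_nhds hp)).isSymmSndFDerivAt (by simp)
  calc pd1 (pd2 g) p.1 p.2
      = pd1 (fun x y => fderiv ℝ G (x, y) (0, 1)) p.1 p.2 :=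
        pd1_congr (eventuallyEq_pd2_fderiv hU hG hp)
    _ = fderiv ℝ (fderiv ℝ G) p (1, 0) (0, 1) := by
        rw [pd1_eq_fderiv (hG'.clm_apply (differentiableAt_const _))]
        change fderiv ℝ (fun q => fderiv ℝ G q (0, 1)) p (1, 0) = _
        simp [fderiv_clm_apply hG' (differentiableAt_const _)]
    _ = fderiv ℝ (fderiv ℝ G) p (0, 1) (1, 0) := hsymm _ _
    _ = pd2 (fun x y => fderiv ℝ G (x, y) (1, 0)) p.1 p.2 := by
        rw [pd2_eq_fderiv (hG'.clm_apply (differentiableAt_const _))]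
        change _ = fderiv ℝ (fun q => fderiv ℝ G q (1, 0)) p (0, 1)
        simp [fderiv_clm_apply hG' (differentiableAt_const _)]
    _ = pd2 (pd1 g) p.1 p.2 := (pd2_congr (eventuallyEq_pd1_fderiv hU hG hp)).symm

end PartialDerivatives

lemma pd1_mul_sub_sq_eq_zero {f g h : ℝ → ℝ → ℝ} {c : ℝ → ℝ} {p : ℝ × ℝ} {U : Set (ℝ × ℝ)}
    (hU : IsOpen U) (hp : p ∈ U) (hf : DifferentiableAt ℝ (uncurry f) p)
    (hg : DifferentiableAt ℝ (uncurry g) p) (hh : DifferentiableAt ℝ (uncurry h) p)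
    (hc : ∀ q ∈ U, f q.1 q.2 * g q.1 q.2 - h q.1 q.2 ^ 2 = c q.2) :
    pd1 f p.1 p.2 * g p.1 p.2 + f p.1 p.2 * pd1 g p.1 p.2
      - 2 * h p.1 p.2 * pd1 h p.1 p.2 = 0 := by
  have hconst : (fun t => f t p.2 * g t p.2 - h t p.2 ^ 2) =ᶠ[𝓝 p.1] fun _ => c p.2 := by
    filter_upwards [(Continuous.prodMk_left p.2).continuousAt.preimage_mem_nhds
      (hU.mem_nhds hp)] with t ht using hc (t, p.2) ht
  have hderiv := (((hasDerivAt_pd1 hf).mul (hasDerivAt_pd1 hg)).sub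
    ((hasDerivAt_pd1 hh).pow 2)).unique ((hasDerivAt_const _ _).congr_of_eventuallyEq hconst)
  rw [← hderiv]
  ring

lemma monge_ampere_transport_of_deriv {K : Type*} [Field K] [CharZero K] {m s u a b c l : K}
    (hl : l ≠ 0) (hMA : m * s - u ^ 2 = -l ^ 2) (hMA_x : a * s + m * c - 2 * u * b = 0) :
    -(u * s / (2 * l ^ 2)) * a + b = ((u * c - 2 * s * b) / (2 * l ^ 2)) * m := by
  field_simp
  linear_combination (-u) * hMA_x + 2 * b * hMA

/-- If `w` is `C³` on an open set `U`, `λ(y) ≠ 0` on `U`, and `w`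
satisfies the hyperbolic Monge–Ampère equation on `U`, then the directional
derivative of `w_xx` along the vector field
`v = (−w_xy·w_yy/(2λ(y)²), 1)` satisfies the transport law
`v·∇(w_xx) = ((w_xy·w_xyy − 2·w_yy·w_xxy)/(2λ(y)²))·w_xx`. -/
theorem monge_ampere_curvature_transport
    (U : Set (ℝ × ℝ)) (hU : IsOpen U) (w : ℝ → ℝ → ℝ) (lam : ℝ → ℝ)
    (hlam : ∀ p ∈ U, lam (Prod.snd p) ≠ 0)
    (hw : ContDiffOn ℝ 3 (fun p : ℝ × ℝ => w p.1 p.2) U)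
    (hMA : ∀ p ∈ U,
      pd1 (pd1 w) p.1 p.2 * pd2 (pd2 w) p.1 p.2
        - (pd2 (pd1 w) p.1 p.2) ^ 2 = -(lam p.2) ^ 2) :
    ∀ p ∈ U,
      -(pd2 (pd1 w) p.1 p.2 * pd2 (pd2 w) p.1 p.2 / (2 * (lam p.2) ^ 2))
          * pd1 (pd1 (pd1 w)) p.1 p.2
        + pd2 (pd1 (pd1 w)) p.1 p.2
      = ((pd2 (pd1 w) p.1 p.2 * pd2 (pd2 (pd1 w)) p.1 p.2
          - 2 * pd2 (pd2 w) p.1 p.2 * pd2 (pd1 (pd1 w)) p.1 p.2)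
          / (2 * (lam p.2) ^ 2)) * pd1 (pd1 w) p.1 p.2 := by
  intro p hp
  have hw_x : ContDiffOn ℝ 2 (uncurry (pd1 w)) U := contDiffOn_pd1 hU hw (by norm_num)
  have hw_y : ContDiffOn ℝ 2 (uncurry (pd2 w)) U := contDiffOn_pd2 hU hw (by norm_num)
  have hdiff {g : ℝ → ℝ → ℝ} (hg : ContDiffOn ℝ 1 (uncurry g) U) :
      DifferentiableAt ℝ (uncurry g) p :=
    (hg.contDiffAt (hU.mem_nhds hp)).differentiableAt one_ne_zero
  have hw_xyy : pd1 (pd2 (pd2 w)) p.1 p.2 = pd2 (pd2 (pd1 w)) p.1 p.2 := by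
    rw [pd1_pd2_comm hU hw_y hp]
    refine pd2_congr ?_
    filter_upwards [hU.mem_nhds hp] with q hq using pd1_pd2_comm hU (hw.of_le (by norm_num)) hq
  have hMA_x := pd1_mul_sub_sq_eq_zero hU hp (hdiff (contDiffOn_pd1 hU hw_x le_rfl))
    (hdiff (contDiffOn_pd2 hU hw_y le_rfl)) (hdiff (contDiffOn_pd2 hU hw_x le_rfl))
    (c := fun y => -lam y ^ 2) hMA
  rw [hw_xyy, pd1_pd2_comm hU hw_x hp] at hMA_x
  exact monge_ampere_transport_of_deriv (hlam p hp) (hMA p hp) hMA_x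
end

section
/- Let S, T > 0 and c > 0, set Ω = {(s,t) ∈ [0,S]×[0,T] : s + t ≥ c}, and define a(t) = max(c−t, 0) and b(s) = max(c−s, 0). Let F : Ω → ℝ be continuous, and let K₁ and K₂ be continuous real-valued kernels on the compact sets {(s,t,σ) : (s,t) ∈ Ω, a(t) ≤ σ ≤ s} and {(s,t,τ) : (s,t) ∈ Ω, b(s) ≤ τ ≤ t} respectively. Then there exists a unique continuous function x : Ω → ℝ satisfying, for every (s,t) ∈ Ω, the two-dimensional Volterra integral equation of the second kind x(s,t) = F(s,t) + ∫_{a(t)}^{s} K₁(s,t,σ)·x(σ,t) dσ + ∫_{b(s)}^{t} K₂(s,t,τ)·x(s,τ) dτ. -/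
/-!
Solutions are the fixed points of the right-hand side `V` acting on `C(Ω, ℝ)`. A function is only
sampled on the segments `a(t) ≤ σ ≤ s` and `b(s) ≤ τ ≤ t`, which stay in `Ω`, so its values off `Ω`
are irrelevant; this also lets Tietze extensions of `F`, `K₁`, `K₂` and `x` prove that `V x` is
continuous. With the weight `w(s, t) = s + t - c ≥ 0` and bounds `M₁`, `M₂` on the kernels, a bound
`|u - v| ≤ C wⁿ` on `Ω` improves to `|V u - V v| ≤ (M₁ + M₂) C wⁿ⁺¹ / (n + 1)`, because
`∫_{a(t)}^s (σ + t - c)ⁿ dσ ≤ (s + t - c)ⁿ⁺¹ / (n + 1)`. Hence `Vⁿ` is Lipschitz with constant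
`((M₁ + M₂) ‖w‖)ⁿ / n!`, some iterate is a contraction, and Banach's fixed point theorem applies.
-/

open MeasureTheory Set Function Filter Topology

universe u v

theorem ContinuousOn.exists_continuous_eqOn {X : Type u} {Y : Type v} [TopologicalSpace X]
    [NormalSpace X] [TopologicalSpace Y] [TietzeExtension.{u, v} Y] {s : Set X} {f : X → Y}
    (hf : ContinuousOn f s) (hs : IsClosed s) : ∃ g : X → Y, Continuous g ∧ EqOn g f s := by
  obtain ⟨g, hg⟩ := ContinuousMap.exists_restrict_eq hs ⟨s.domRestrict f, hf.domRestrict⟩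
  exact ⟨g, g.continuous, fun x hx => congr($hg ⟨x, hx⟩)⟩

theorem intervalIntegral.continuous_parametric_intervalIntegral_of_continuous_limits
    {X E : Type*} [TopologicalSpace X] [NormedAddCommGroup E] [NormedSpace ℝ E] {f : X → ℝ → E}
    (hf : Continuous (uncurry f)) {a b : X → ℝ} (ha : Continuous a) (hb : Continuous b) :
    Continuous fun x => ∫ t in a x..b x, f x t := by
  have hint (x : X) (a b : ℝ) : IntervalIntegrable (f x) volume a b :=
    (hf.uncurry_left x).intervalIntegrable a b
  simp_rw [← fun x => integral_interval_sub_left (hint x 0 (b x)) (hint x 0 (a x))]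
  exact (continuous_parametric_intervalIntegral_of_continuous hf hb).sub
    (continuous_parametric_intervalIntegral_of_continuous hf ha)

theorem abs_intervalIntegral_le_mul_pow_div {h : ℝ → ℝ} {a b e C : ℝ} {n : ℕ} (hab : a ≤ b)
    (hae : 0 ≤ a + e) (hC : 0 ≤ C) (hh : ∀ σ ∈ Icc a b, |h σ| ≤ C * (σ + e) ^ n) :
    |∫ σ in a..b, h σ| ≤ C * (b + e) ^ (n + 1) / (n + 1) :=
  calc |∫ σ in a..b, h σ|
      ≤ ∫ σ in a..b, C * (σ + e) ^ n := by
        rw [← Real.norm_eq_abs]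
        exact intervalIntegral.norm_integral_le_of_norm_le hab
          (ae_of_all _ fun σ hσ => hh σ (Ioc_subset_Icc_self hσ))
          ((by fun_prop : Continuous fun σ : ℝ => C * (σ + e) ^ n).intervalIntegrable _ _)
    _ = C * (((b + e) ^ (n + 1) - (a + e) ^ (n + 1)) / (n + 1)) := by
        rw [intervalIntegral.integral_const_mul,
          intervalIntegral.integral_comp_add_right (· ^ n), integral_pow]
    _ ≤ C * (b + e) ^ (n + 1) / (n + 1) := by
        rw [mul_div_assoc]
        gcongr
        exact sub_le_self _ (pow_nonneg hae _)

theorem abs_integral_mul_sub_integral_mul_le {k g₁ g₂ : ℝ → ℝ} {a b e M C : ℝ} {n : ℕ}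
    (hab : a ≤ b) (hae : 0 ≤ a + e) (hk : ContinuousOn k (Icc a b))
    (hg₁ : ContinuousOn g₁ (Icc a b)) (hg₂ : ContinuousOn g₂ (Icc a b))
    (hkM : ∀ σ ∈ Icc a b, |k σ| ≤ M) (hC : 0 ≤ C)
    (hg : ∀ σ ∈ Icc a b, |g₁ σ - g₂ σ| ≤ C * (σ + e) ^ n) :
    |(∫ σ in a..b, k σ * g₁ σ) - ∫ σ in a..b, k σ * g₂ σ|
      ≤ M * C * (b + e) ^ (n + 1) / (n + 1) := by
  have hM : 0 ≤ M := (abs_nonneg _).trans (hkM a (left_mem_Icc.2 hab))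
  have hint {g : ℝ → ℝ} (hg : ContinuousOn g (Icc a b)) :
      IntervalIntegrable (fun σ => k σ * g σ) volume a b :=
    (hk.mul hg).intervalIntegrable_of_Icc hab
  rw [← intervalIntegral.integral_sub (hint hg₁) (hint hg₂)]
  refine abs_intervalIntegral_le_mul_pow_div hab hae (mul_nonneg hM hC) fun σ hσ => ?_
  rw [← mul_sub, abs_mul, mul_assoc]
  exact mul_le_mul (hkM σ hσ) (hg σ hσ) (abs_nonneg _) hM

theorem exists_unique_isFixedPt_of_dist_iterate_le {X : Type*} [MetricSpace X] [CompleteSpace X]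
    [Nonempty X] {f : X → X} {a : ℕ → ℝ} (ha : Tendsto a atTop (𝓝 0))
    (hf : ∀ n x y, dist (f^[n] x) (f^[n] y) ≤ a n * dist x y) : ∃! x, IsFixedPt f x := by
  obtain ⟨n, hn⟩ := (ha.eventually_lt_const zero_lt_one).exists
  have hcontr : ContractingWith (a n).toNNReal f^[n] :=
    ⟨Real.toNNReal_lt_one.2 hn, LipschitzWith.of_dist_le_mul fun x y =>
      (hf n x y).trans (mul_le_mul_of_nonneg_right (Real.le_coe_toNNReal _) dist_nonneg)⟩
  exact ⟨_, hcontr.isFixedPt_fixedPoint_iterate,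
    fun y hy => hcontr.fixedPoint_unique (hy.iterate n)⟩

namespace ContinuousMap

open scoped Nat

variable {X E : Type*} [TopologicalSpace X] [CompactSpace X] [MetricSpace E]
  {V : C(X, E) → C(X, E)} {L : ℝ}

theorem dist_iterate_apply_le {w : X → ℝ} (hL : 0 ≤ L)
    (hV : ∀ (u v : C(X, E)) (C : ℝ) (n : ℕ), 0 ≤ C → (∀ q, dist (u q) (v q) ≤ C * w q ^ n) →
      ∀ q, dist (V u q) (V v q) ≤ L * C * w q ^ (n + 1) / (n + 1))
    (u v : C(X, E)) (n : ℕ) (q : X) :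
    dist (V^[n] u q) (V^[n] v q) ≤ L ^ n / n ! * dist u v * w q ^ n := by
  induction n generalizing q with
  | zero => simpa using dist_apply_le_dist q
  | succ n ih =>
    rw [iterate_succ_apply', iterate_succ_apply']
    refine (hV _ _ _ n (by positivity) ih q).trans_eq ?_
    rw [Nat.factorial_succ]
    push_cast
    field_simp
    ring

theorem exists_unique_isFixedPt_of_weighted [CompleteSpace E] [Nonempty E] {w : C(X, ℝ)}
    (hL : 0 ≤ L) (hw : ∀ q, 0 ≤ w q)
    (hV : ∀ (u v : C(X, E)) (C : ℝ) (n : ℕ), 0 ≤ C → (∀ q, dist (u q) (v q) ≤ C * w q ^ n) →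
      ∀ q, dist (V u q) (V v q) ≤ L * C * w q ^ (n + 1) / (n + 1)) :
    ∃! u, IsFixedPt V u := by
  have : Nonempty C(X, E) := ⟨.const X (Classical.arbitrary E)⟩
  refine exists_unique_isFixedPt_of_dist_iterate_le
    (FloorSemiring.tendsto_pow_div_factorial_atTop (L * ‖w‖)) fun n u v => ?_
  refine (dist_le (by positivity)).2 fun q => (dist_iterate_apply_le hL hV u v n q).trans ?_
  rw [mul_pow, mul_div_right_comm, mul_right_comm]
  gcongr
  · exact hw q
  · exact (le_abs_self _).trans (norm_coe_le_norm w q)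

end ContinuousMap

namespace Volterra

variable {S T c : ℝ}

def domain (S T c : ℝ) : Set (ℝ × ℝ) :=
  {p | p.1 ∈ Icc 0 S ∧ p.2 ∈ Icc 0 T ∧ c ≤ p.1 + p.2}

def kernelDomain₁ (S T c : ℝ) : Set ((ℝ × ℝ) × ℝ) :=
  {q | q.1 ∈ domain S T c ∧ max (c - q.1.2) 0 ≤ q.2 ∧ q.2 ≤ q.1.1}

def kernelDomain₂ (S T c : ℝ) : Set ((ℝ × ℝ) × ℝ) :=
  {q | q.1 ∈ domain S T c ∧ max (c - q.1.1) 0 ≤ q.2 ∧ q.2 ≤ q.1.2}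

noncomputable def operator (c : ℝ) (F : ℝ → ℝ → ℝ) (K₁ K₂ : ℝ → ℝ → ℝ → ℝ) (x : ℝ → ℝ → ℝ)
    (s t : ℝ) : ℝ :=
  F s t + (∫ σ in (max (c - t) 0)..s, K₁ s t σ * x σ t)
    + (∫ τ in (max (c - s) 0)..t, K₂ s t τ * x s τ)

theorem isClosed_domain : IsClosed (domain S T c) :=
  (isClosed_Icc.preimage continuous_fst).inter ((isClosed_Icc.preimage continuous_snd).inter
    (isClosed_le continuous_const (continuous_fst.add continuous_snd)))

theorem isCompact_domain : IsCompact (domain S T c) :=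
  (isCompact_Icc.prod isCompact_Icc).of_isClosed_subset isClosed_domain fun _ hp => ⟨hp.1, hp.2.1⟩

instance : CompactSpace (domain S T c) :=
  isCompact_iff_compactSpace.mp isCompact_domain

theorem isClosed_kernelDomain₁ : IsClosed (kernelDomain₁ S T c) :=
  (isClosed_domain.preimage continuous_fst).inter
    ((isClosed_le (by fun_prop) continuous_snd).inter (isClosed_le continuous_snd (by fun_prop)))

theorem isClosed_kernelDomain₂ : IsClosed (kernelDomain₂ S T c) :=
  (isClosed_domain.preimage continuous_fst).inter
    ((isClosed_le (by fun_prop) continuous_snd).inter (isClosed_le continuous_snd (by fun_prop)))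

theorem isCompact_kernelDomain₁ : IsCompact (kernelDomain₁ S T c) :=
  (isCompact_domain.prod (isCompact_Icc (a := 0) (b := S))).of_isClosed_subset
    isClosed_kernelDomain₁ fun _ hq =>
      ⟨hq.1, (le_max_right _ _).trans hq.2.1, hq.2.2.trans hq.1.1.2⟩

theorem isCompact_kernelDomain₂ : IsCompact (kernelDomain₂ S T c) :=
  (isCompact_domain.prod (isCompact_Icc (a := 0) (b := T))).of_isClosed_subset
    isClosed_kernelDomain₂ fun _ hq =>
      ⟨hq.1, (le_max_right _ _).trans hq.2.1, hq.2.2.trans hq.1.2.1.2⟩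

variable {p : ℝ × ℝ}

theorem max_sub_snd_le_fst (hp : p ∈ domain S T c) : max (c - p.2) 0 ≤ p.1 :=
  max_le (by linarith [hp.2.2]) hp.1.1

theorem max_sub_fst_le_snd (hp : p ∈ domain S T c) : max (c - p.1) 0 ≤ p.2 :=
  max_le (by linarith [hp.2.2]) hp.2.1.1

theorem mapsTo_segment₁ (hp : p ∈ domain S T c) :
    MapsTo (fun σ => (σ, p.2)) (Icc (max (c - p.2) 0) p.1) (domain S T c) := fun σ hσ =>
  ⟨⟨(le_max_right _ _).trans hσ.1, hσ.2.trans hp.1.2⟩, hp.2.1,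
    by linarith [le_max_left (c - p.2) 0, hσ.1]⟩

theorem mapsTo_segment₂ (hp : p ∈ domain S T c) :
    MapsTo (fun τ => (p.1, τ)) (Icc (max (c - p.1) 0) p.2) (domain S T c) := fun τ hτ =>
  ⟨hp.1, ⟨(le_max_right _ _).trans hτ.1, hτ.2.trans hp.2.1.2⟩,
    by linarith [le_max_left (c - p.1) 0, hτ.1]⟩

theorem mapsTo_kernelDomain₁ (hp : p ∈ domain S T c) :
    MapsTo (fun σ => (p, σ)) (Icc (max (c - p.2) 0) p.1) (kernelDomain₁ S T c) := fun _ hσ =>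
  ⟨hp, hσ⟩

theorem mapsTo_kernelDomain₂ (hp : p ∈ domain S T c) :
    MapsTo (fun τ => (p, τ)) (Icc (max (c - p.1) 0) p.2) (kernelDomain₂ S T c) := fun _ hτ =>
  ⟨hp, hτ⟩

variable {F F' : ℝ → ℝ → ℝ} {K₁ K₁' K₂ K₂' : ℝ → ℝ → ℝ → ℝ} {x x' y : ℝ → ℝ → ℝ}

theorem operator_eqOn (hF : EqOn (uncurry F) (uncurry F') (domain S T c))
    (hK₁ : EqOn (uncurry (uncurry K₁)) (uncurry (uncurry K₁')) (kernelDomain₁ S T c))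
    (hK₂ : EqOn (uncurry (uncurry K₂)) (uncurry (uncurry K₂')) (kernelDomain₂ S T c))
    (hx : EqOn (uncurry x) (uncurry x') (domain S T c)) :
    EqOn (uncurry (operator c F K₁ K₂ x)) (uncurry (operator c F' K₁' K₂' x')) (domain S T c) := by
  intro p hp
  have h₁ : EqOn (fun σ => K₁ p.1 p.2 σ * x σ p.2) (fun σ => K₁' p.1 p.2 σ * x' σ p.2)
      (uIcc (max (c - p.2) 0) p.1) := by
    rw [uIcc_of_le (max_sub_snd_le_fst hp)]
    exact fun σ hσ =>
      congr_arg₂ (· * ·) (hK₁ (mapsTo_kernelDomain₁ hp hσ)) (hx (mapsTo_segment₁ hp hσ))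
  have h₂ : EqOn (fun τ => K₂ p.1 p.2 τ * x p.1 τ) (fun τ => K₂' p.1 p.2 τ * x' p.1 τ)
      (uIcc (max (c - p.1) 0) p.2) := by
    rw [uIcc_of_le (max_sub_fst_le_snd hp)]
    exact fun τ hτ =>
      congr_arg₂ (· * ·) (hK₂ (mapsTo_kernelDomain₂ hp hτ)) (hx (mapsTo_segment₂ hp hτ))
  exact congr_arg₂ (· + ·) (congr_arg₂ (· + ·) (hF hp) (intervalIntegral.integral_congr h₁))
    (intervalIntegral.integral_congr h₂)

open intervalIntegral in
theorem continuous_operator (hF : Continuous (uncurry F))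
    (hK₁ : Continuous (uncurry (uncurry K₁))) (hK₂ : Continuous (uncurry (uncurry K₂)))
    (hx : Continuous (uncurry x)) : Continuous (uncurry (operator c F K₁ K₂ x)) := by
  have h₁ : Continuous (uncurry fun (p : ℝ × ℝ) σ => K₁ p.1 p.2 σ * x σ p.2) :=
    hK₁.mul (hx.comp (continuous_snd.prodMk continuous_fst.snd))
  have h₂ : Continuous (uncurry fun (p : ℝ × ℝ) τ => K₂ p.1 p.2 τ * x p.1 τ) :=
    hK₂.mul (hx.comp (continuous_fst.fst.prodMk continuous_snd))
  exact (hF.add (continuous_parametric_intervalIntegral_of_continuous_limits h₁ (by fun_prop)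
    continuous_fst)).add
    (continuous_parametric_intervalIntegral_of_continuous_limits h₂ (by fun_prop) continuous_snd)

theorem continuousOn_operator (hF : ContinuousOn (uncurry F) (domain S T c))
    (hK₁ : ContinuousOn (uncurry (uncurry K₁)) (kernelDomain₁ S T c))
    (hK₂ : ContinuousOn (uncurry (uncurry K₂)) (kernelDomain₂ S T c))
    (hx : ContinuousOn (uncurry x) (domain S T c)) :
    ContinuousOn (uncurry (operator c F K₁ K₂ x)) (domain S T c) := by
  obtain ⟨F', hF'c, hF'⟩ := hF.exists_continuous_eqOn isClosed_domain
  obtain ⟨K₁', hK₁'c, hK₁'⟩ := hK₁.exists_continuous_eqOn isClosed_kernelDomain₁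
  obtain ⟨K₂', hK₂'c, hK₂'⟩ := hK₂.exists_continuous_eqOn isClosed_kernelDomain₂
  obtain ⟨x', hx'c, hx'⟩ := hx.exists_continuous_eqOn isClosed_domain
  exact (continuous_operator (c := c) (F := curry F') (K₁ := curry (curry K₁'))
    (K₂ := curry (curry K₂')) (x := curry x') hF'c hK₁'c hK₂'c hx'c).continuousOn.congr
    (operator_eqOn hF'.symm hK₁'.symm hK₂'.symm hx'.symm)

theorem abs_operator_sub_le {M₁ M₂ C : ℝ} {n : ℕ}
    (hK₁ : ContinuousOn (uncurry (uncurry K₁)) (kernelDomain₁ S T c))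
    (hK₂ : ContinuousOn (uncurry (uncurry K₂)) (kernelDomain₂ S T c))
    (hx : ContinuousOn (uncurry x) (domain S T c)) (hy : ContinuousOn (uncurry y) (domain S T c))
    (hM₁ : ∀ q ∈ kernelDomain₁ S T c, |uncurry (uncurry K₁) q| ≤ M₁)
    (hM₂ : ∀ q ∈ kernelDomain₂ S T c, |uncurry (uncurry K₂) q| ≤ M₂) (hC : 0 ≤ C)
    (hxy : ∀ p ∈ domain S T c, |x p.1 p.2 - y p.1 p.2| ≤ C * (p.1 + p.2 - c) ^ n)
    (hp : p ∈ domain S T c) :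
    |operator c F K₁ K₂ x p.1 p.2 - operator c F K₁ K₂ y p.1 p.2|
      ≤ (M₁ + M₂) * C * (p.1 + p.2 - c) ^ (n + 1) / (n + 1) := by
  have h₁ : |(∫ σ in (max (c - p.2) 0)..p.1, K₁ p.1 p.2 σ * x σ p.2)
      - ∫ σ in (max (c - p.2) 0)..p.1, K₁ p.1 p.2 σ * y σ p.2|
      ≤ M₁ * C * (p.1 + p.2 - c) ^ (n + 1) / (n + 1) := by
    rw [add_sub_assoc]
    refine abs_integral_mul_sub_integral_mul_le (max_sub_snd_le_fst hp)
      (by linarith [le_max_left (c - p.2) 0])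
      (hK₁.comp (by fun_prop) (mapsTo_kernelDomain₁ hp))
      (hx.comp (by fun_prop) (mapsTo_segment₁ hp)) (hy.comp (by fun_prop) (mapsTo_segment₁ hp))
      (fun σ hσ => hM₁ _ (mapsTo_kernelDomain₁ hp hσ)) hC fun σ hσ => ?_
    exact (hxy _ (mapsTo_segment₁ hp hσ)).trans_eq (by dsimp only; ring)
  have h₂ : |(∫ τ in (max (c - p.1) 0)..p.2, K₂ p.1 p.2 τ * x p.1 τ)
      - ∫ τ in (max (c - p.1) 0)..p.2, K₂ p.1 p.2 τ * y p.1 τ|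
      ≤ M₂ * C * (p.1 + p.2 - c) ^ (n + 1) / (n + 1) := by
    rw [show p.1 + p.2 - c = p.2 + (p.1 - c) by ring]
    refine abs_integral_mul_sub_integral_mul_le (max_sub_fst_le_snd hp)
      (by linarith [le_max_left (c - p.1) 0])
      (hK₂.comp (by fun_prop) (mapsTo_kernelDomain₂ hp))
      (hx.comp (by fun_prop) (mapsTo_segment₂ hp)) (hy.comp (by fun_prop) (mapsTo_segment₂ hp))
      (fun τ hτ => hM₂ _ (mapsTo_kernelDomain₂ hp hτ)) hC fun τ hτ => ?_
    exact (hxy _ (mapsTo_segment₂ hp hτ)).trans_eq (by dsimp only; ring)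
  calc _ = |(_ - _) + (_ - _)| := by simp only [operator]; ring_nf
    _ ≤ _ := (abs_add_le _ _).trans (add_le_add h₁ h₂)
    _ = _ := by ring

noncomputable def curryExtend (z : C(domain S T c, ℝ)) : ℝ → ℝ → ℝ :=
  curry (extend Subtype.val z 0)

theorem curryExtend_apply (z : C(domain S T c, ℝ)) (hp : p ∈ domain S T c) :
    curryExtend z p.1 p.2 = z ⟨p, hp⟩ :=
  Subtype.val_injective.extend_apply z 0 ⟨p, hp⟩

theorem continuousOn_curryExtend (z : C(domain S T c, ℝ)) :
    ContinuousOn (uncurry (curryExtend z)) (domain S T c) := by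
  rw [continuousOn_iff_continuous_domRestrict]
  convert z.continuous
  ext ⟨p, hp⟩
  exact curryExtend_apply z hp

noncomputable def map (hF : ContinuousOn (uncurry F) (domain S T c))
    (hK₁ : ContinuousOn (uncurry (uncurry K₁)) (kernelDomain₁ S T c))
    (hK₂ : ContinuousOn (uncurry (uncurry K₂)) (kernelDomain₂ S T c))
    (z : C(domain S T c, ℝ)) : C(domain S T c, ℝ) :=
  ⟨(domain S T c).domRestrict (uncurry (operator c F K₁ K₂ (curryExtend z))),
    (continuousOn_operator hF hK₁ hK₂ (continuousOn_curryExtend z)).domRestrict⟩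

variable (hF : ContinuousOn (uncurry F) (domain S T c))
  (hK₁ : ContinuousOn (uncurry (uncurry K₁)) (kernelDomain₁ S T c))
  (hK₂ : ContinuousOn (uncurry (uncurry K₂)) (kernelDomain₂ S T c))

theorem exists_unique_isFixedPt_map : ∃! z, IsFixedPt (map hF hK₁ hK₂) z := by
  obtain ⟨M₁, hM₁0, hM₁⟩ :=
    (isCompact_kernelDomain₁.image_of_continuousOn hK₁).isBounded.exists_pos_norm_le
  obtain ⟨M₂, hM₂0, hM₂⟩ :=
    (isCompact_kernelDomain₂.image_of_continuousOn hK₂).isBounded.exists_pos_norm_le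
  refine ContinuousMap.exists_unique_isFixedPt_of_weighted (L := M₁ + M₂)
    (w := ⟨fun p => p.1.1 + p.1.2 - c, by fun_prop⟩) (by positivity)
    (fun p => sub_nonneg.2 p.2.2.2) fun u v C n hC huv p => ?_
  simp only [Real.dist_eq] at huv ⊢
  refine abs_operator_sub_le hK₁ hK₂ (continuousOn_curryExtend u) (continuousOn_curryExtend v)
    (fun q hq => hM₁ _ (mem_image_of_mem _ hq)) (fun q hq => hM₂ _ (mem_image_of_mem _ hq)) hC
    (fun q hq => ?_) p.2
  rw [curryExtend_apply u hq, curryExtend_apply v hq]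
  exact huv ⟨q, hq⟩

theorem eqOn_operator_of_isFixedPt {z : C(domain S T c, ℝ)} (hz : IsFixedPt (map hF hK₁ hK₂) z) :
    EqOn (uncurry (curryExtend z)) (uncurry (operator c F K₁ K₂ (curryExtend z)))
      (domain S T c) := fun p hp =>
  (curryExtend_apply z hp).trans (DFunLike.congr_fun hz.symm ⟨p, hp⟩)

theorem isFixedPt_map_domRestrict (hy : ContinuousOn (uncurry y) (domain S T c))
    (hyeq : EqOn (uncurry y) (uncurry (operator c F K₁ K₂ y)) (domain S T c)) :
    IsFixedPt (map hF hK₁ hK₂) ⟨(domain S T c).domRestrict (uncurry y), hy.domRestrict⟩ := by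
  ext ⟨p, hp⟩
  refine (operator_eqOn (eqOn_refl _ _) (eqOn_refl _ _) (eqOn_refl _ _) (fun q hq => ?_) hp).trans
    (hyeq hp).symm
  exact curryExtend_apply _ hq

end Volterra

theorem volterra_existence_uniqueness_general
    (S T c : ℝ)
    (Ω : Set (ℝ × ℝ))
    (hΩ : Ω = {p : ℝ × ℝ | p.1 ∈ Set.Icc 0 S ∧ p.2 ∈ Set.Icc 0 T ∧ c ≤ p.1 + p.2})
    (F : ℝ → ℝ → ℝ) (hF : ContinuousOn (fun p : ℝ × ℝ => F p.1 p.2) Ω)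
    (K₁ K₂ : ℝ → ℝ → ℝ → ℝ)
    (hK₁ : ContinuousOn (fun q : (ℝ × ℝ) × ℝ => K₁ q.1.1 q.1.2 q.2)
      {q : (ℝ × ℝ) × ℝ | q.1 ∈ Ω ∧ max (c - q.1.2) 0 ≤ q.2 ∧ q.2 ≤ q.1.1})
    (hK₂ : ContinuousOn (fun q : (ℝ × ℝ) × ℝ => K₂ q.1.1 q.1.2 q.2)
      {q : (ℝ × ℝ) × ℝ | q.1 ∈ Ω ∧ max (c - q.1.1) 0 ≤ q.2 ∧ q.2 ≤ q.1.2}) :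
    ∃ x : ℝ → ℝ → ℝ,
      (ContinuousOn (fun p : ℝ × ℝ => x p.1 p.2) Ω ∧
        ∀ p ∈ Ω, x p.1 p.2 = F p.1 p.2
          + (∫ σ in (max (c - p.2) 0)..p.1, K₁ p.1 p.2 σ * x σ p.2)
          + (∫ τ in (max (c - p.1) 0)..p.2, K₂ p.1 p.2 τ * x p.1 τ)) ∧
      ∀ y : ℝ → ℝ → ℝ,
        ContinuousOn (fun p : ℝ × ℝ => y p.1 p.2) Ω →
        (∀ p ∈ Ω, y p.1 p.2 = F p.1 p.2
          + (∫ σ in (max (c - p.2) 0)..p.1, K₁ p.1 p.2 σ * y σ p.2)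
          + (∫ τ in (max (c - p.1) 0)..p.2, K₂ p.1 p.2 τ * y p.1 τ)) →
        ∀ p ∈ Ω, y p.1 p.2 = x p.1 p.2 := by
  obtain rfl : Ω = Volterra.domain S T c := hΩ
  obtain ⟨z, hz, hz_unique⟩ := Volterra.exists_unique_isFixedPt_map hF hK₁ hK₂
  refine ⟨Volterra.curryExtend z, ⟨Volterra.continuousOn_curryExtend z,
    Volterra.eqOn_operator_of_isFixedPt hF hK₁ hK₂ hz⟩, fun y hy hyeq p hp => ?_⟩
  rw [Volterra.curryExtend_apply z hp,
    ← hz_unique _ (Volterra.isFixedPt_map_domRestrict hF hK₁ hK₂ hy hyeq)]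
  rfl

/-- Existence and uniqueness of a continuous solution of the
two-dimensional Volterra integral equation of the second kind on the truncated
cylinder domain `Ω = {(s,t) ∈ [0,S]×[0,T] : s+t ≥ c}`, with lower limits
`a(t) = (c−t)⁺`, `b(s) = (c−s)⁺`, continuous forcing `F`, and kernels `K₁, K₂`
continuous on the indicated compact sets. -/
theorem volterra_existence_uniqueness
    (S T c : ℝ) (hS : 0 < S) (hT : 0 < T) (hc : 0 < c)
    (Ω : Set (ℝ × ℝ))
    (hΩ : Ω = {p : ℝ × ℝ | p.1 ∈ Set.Icc 0 S ∧ p.2 ∈ Set.Icc 0 T ∧ c ≤ p.1 + p.2})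
    (F : ℝ → ℝ → ℝ) (hF : ContinuousOn (fun p : ℝ × ℝ => F p.1 p.2) Ω)
    (K₁ K₂ : ℝ → ℝ → ℝ → ℝ)
    (hK₁ : ContinuousOn (fun q : (ℝ × ℝ) × ℝ => K₁ q.1.1 q.1.2 q.2)
      {q : (ℝ × ℝ) × ℝ | q.1 ∈ Ω ∧ max (c - q.1.2) 0 ≤ q.2 ∧ q.2 ≤ q.1.1})
    (hK₂ : ContinuousOn (fun q : (ℝ × ℝ) × ℝ => K₂ q.1.1 q.1.2 q.2)
      {q : (ℝ × ℝ) × ℝ | q.1 ∈ Ω ∧ max (c - q.1.1) 0 ≤ q.2 ∧ q.2 ≤ q.1.2}) :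
    ∃ x : ℝ → ℝ → ℝ,
      (ContinuousOn (fun p : ℝ × ℝ => x p.1 p.2) Ω ∧
        ∀ p ∈ Ω, x p.1 p.2 = F p.1 p.2
          + (∫ σ in (max (c - p.2) 0)..p.1, K₁ p.1 p.2 σ * x σ p.2)
          + (∫ τ in (max (c - p.1) 0)..p.2, K₂ p.1 p.2 τ * x p.1 τ)) ∧
      ∀ y : ℝ → ℝ → ℝ,
        ContinuousOn (fun p : ℝ × ℝ => y p.1 p.2) Ω →
        (∀ p ∈ Ω, y p.1 p.2 = F p.1 p.2
          + (∫ σ in (max (c - p.2) 0)..p.1, K₁ p.1 p.2 σ * y σ p.2)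
          + (∫ τ in (max (c - p.1) 0)..p.2, K₂ p.1 p.2 τ * y p.1 τ)) →
        ∀ p ∈ Ω, y p.1 p.2 = x p.1 p.2 :=
  volterra_existence_uniqueness_general S T c Ω hΩ F hF K₁ K₂ hK₁ hK₂
end

section
/- Let c > 0 and let λ : (0,∞) → ℝ be continuously differentiable with λ(u) > 0 for u > 0. Let the Cauchy–Goursat data consist of continuous g : [c,∞) → ℝ and h : [c,∞) → ℝ, absolutely continuous f : [0,c] → ℝ, and n ∈ L¹([0,c]), satisfying the corner conditions g(c) = f(c) and h(c) = f(0). Define 𝒢 and the operator 𝒜 on continuous functions on Ω̄_c = {(s,t) : s ≥ 0, t ≥ 0, s+t ≥ c} as in the context. If x₀ is continuous on Ω̄_c and satisfies the Dirichlet conditions x₀(s,0) = g(s) for s ≥ c, x₀(0,t) = h(t) for t ≥ c, and x₀(s, c−s) = f(s) for 0 ≤ s ≤ c, then x₁ := 𝒜x₀ also satisfies these three Dirichlet conditions, and moreover for almost every ξ ∈ (0,c) the one-sided limit D_n x₁(ξ) := lim_{z→0⁺} (x₁(ξ+z, c−ξ+z) − x₁(ξ, c−ξ))/z exists and equals n(ξ).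 -/
/-!
On the Goursat boundaries and on the Cauchy segment the Volterra integrals in `Aop` either vanish
or, via the Dirichlet data and the corner conditions, combine with the boundary forcing into
`2λ · (boundary value)`. Moving a distance `z` off the Cauchy point `(ξ, c - ξ)` along the normal,
both Volterra integrals run over windows of length `2z`, so divided by `z` each tends to
`2λ'(c) f(ξ)`; these are cancelled by the variation `-4λ'(c) f(ξ)` coming from the prefactor
`1/(2λ(c + 2z))`. The `f`-terms contribute `f'(ξ) - f'(ξ) = 0` and the `n`-term `2λ(c) n(ξ)`,
at every point where Lebesgue's differentiation theorem applies to `f'` and to `n`.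
-/

open MeasureTheory

/-- The finite-cylinder hodograph domain `Ω̄_c = {(s,t) : s ≥ 0, t ≥ 0, s+t ≥ c}`. -/
def OmegaC (c : ℝ) : Set (ℝ × ℝ) := {p : ℝ × ℝ | 0 ≤ p.1 ∧ 0 ≤ p.2 ∧ c ≤ p.1 + p.2}

/-- The boundary forcing term `𝒢(s,t)` built from the Cauchy–Goursat data
`{g, h, f, n}`. -/
noncomputable def Gbd (c : ℝ) (lam g h f n : ℝ → ℝ) (s t : ℝ) : ℝ :=
  (if s ≤ c then lam c * f s
    else 2 * lam s * g s - lam c * g c - ∫ σ in c..s, g σ * deriv lam σ)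
  + (if t ≤ c then lam c * f (c - t)
    else 2 * lam t * h t - lam c * h c - ∫ τ in c..t, h τ * deriv lam τ)
  + lam c * ∫ σ in (max (c - t) 0)..(min c s), n σ

/-- The operator `𝒜` of the Volterra formulation of the Cauchy–Goursat problem. -/
noncomputable def Aop (c : ℝ) (lam g h f n : ℝ → ℝ) (u : ℝ → ℝ → ℝ) (s t : ℝ) : ℝ :=
  (1 / (2 * lam (s + t))) * (Gbd c lam g h f n s t
    + (∫ σ in (max (c - t) 0)..s, deriv lam (σ + t) * u σ t)
    + (∫ τ in (max (c - s) 0)..t, deriv lam (s + τ) * u s τ))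

open Set Filter Topology

theorem HasDerivAt.tendsto_sub_div_nhdsGT {φ : ℝ → ℝ} {d x : ℝ} (hφ : HasDerivAt φ d x)
    (a b : ℝ) :
    Tendsto (fun z => (φ (x + a * z) - φ (x + b * z)) / z) (𝓝[>] 0) (𝓝 ((a - b) * d)) := by
  have hlin (k : ℝ) : HasDerivAt (fun z => φ (x + k * z)) (d * k) 0 := by
    have hk : HasDerivAt (fun z : ℝ => x + k * z) k 0 := by
      simpa using ((hasDerivAt_id (0:ℝ)).const_mul k).const_add x
    exact (by simpa using hφ : HasDerivAt φ d (x + k * 0)).comp 0 hk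
  convert ((hlin a).sub (hlin b)).tendsto_slope_zero_right using 2 with z
  · simp [div_eq_inv_mul]
  · ring

theorem tendsto_integral_symm_div_nhdsGT {K : ℝ × ℝ → ℝ} {a δ : ℝ} (hδ : 0 < δ)
    (hK : ContinuousOn K {p | |p.1 - a| ≤ p.2 ∧ p.2 ≤ δ}) :
    Tendsto (fun z => (∫ σ in (a - z)..(a + z), K (σ, z)) / z) (𝓝[>] 0)
      (𝓝 (2 * K (a, 0))) := by
  have hslice {z : ℝ} (hz : z ∈ Ioc 0 δ) {σ : ℝ} (hσ : σ ∈ Icc (a - z) (a + z)) :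
      (σ, z) ∈ {p : ℝ × ℝ | |p.1 - a| ≤ p.2 ∧ p.2 ≤ δ} :=
    ⟨abs_sub_le_iff.mpr ⟨by linarith [hσ.2], by linarith [hσ.1]⟩, hz.2⟩
  rw [Metric.tendsto_nhds]
  intro ε hε
  obtain ⟨η, hη, hKη⟩ := Metric.continuousWithinAt_iff.mp
    (hK (a, 0) ⟨by simp, hδ.le⟩) (ε / 3) (by positivity)
  filter_upwards [Ioo_mem_nhdsGT (lt_min hη hδ)] with z ⟨hz0, hzηδ⟩
  have hzδ : z ∈ Ioc 0 δ := ⟨hz0, (hzηδ.trans_le (min_le_right _ _)).le⟩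
  have hbound : ∀ σ ∈ uIoc (a - z) (a + z), ‖K (σ, z) - K (a, 0)‖ ≤ ε / 3 := by
    intro σ hσ
    rw [uIoc_of_le (by linarith)] at hσ
    have hmem := hslice hzδ (Ioc_subset_Icc_self hσ)
    refine (hKη hmem ?_).le
    rw [Prod.dist_eq, Real.dist_eq, Real.dist_eq, sub_zero, abs_of_pos hz0]
    exact max_lt (hmem.1.trans_lt (hzηδ.trans_le (min_le_left _ _)))
      (hzηδ.trans_le (min_le_left _ _))
  have hint : IntervalIntegrable (fun σ => K (σ, z)) volume (a - z) (a + z) := by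
    refine ContinuousOn.intervalIntegrable (hK.comp (by fun_prop) fun σ hσ => hslice hzδ ?_)
    rwa [uIcc_of_le (by linarith)] at hσ
  have hsub : (∫ σ in (a - z)..(a + z), K (σ, z)) / z - 2 * K (a, 0)
      = (∫ σ in (a - z)..(a + z), (K (σ, z) - K (a, 0))) / z := by
    rw [intervalIntegral.integral_sub hint intervalIntegrable_const,
      intervalIntegral.integral_const, smul_eq_mul]
    field_simp
    ring
  have hnorm := intervalIntegral.norm_integral_le_of_norm_le_const hbound
  rw [show |a + z - (a - z)| = 2 * z by rw [abs_of_pos (by linarith)]; ring,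
    Real.norm_eq_abs] at hnorm
  rw [Real.dist_eq, hsub, abs_div, abs_of_pos hz0, div_lt_iff₀ hz0]
  linarith [mul_pos hε hz0]

theorem ae_hasDerivAt_of_eq_add_integral {f f' : ℝ → ℝ} {a b : ℝ}
    (hf' : IntegrableOn f' (Icc a b)) (hf : ∀ x ∈ Icc a b, f x = f a + ∫ σ in a..x, f' σ) :
    ∀ᵐ x, x ∈ Ioo a b → HasDerivAt f (f' x) x := by
  rcases lt_or_ge b a with hba | hab
  · exact Eventually.of_forall fun x hx => absurd (hx.1.trans hx.2) hba.not_gt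
  have hf'ab : IntervalIntegrable f' volume a b :=
    (intervalIntegrable_iff_integrableOn_Icc_of_le hab).mpr hf'
  filter_upwards [hf'ab.ae_hasDerivAt_integral] with x hx hxab
  rw [uIcc_of_le hab] at hx
  refine ((hx (Ioo_subset_Icc_self hxab) a (left_mem_Icc.2 hab)).const_add
    (f a)).congr_of_eventuallyEq ?_
  filter_upwards [Icc_mem_nhds hxab.1 hxab.2] with y hy using hf y hy

theorem tendsto_integral_symm_div_nhdsGT_of_hasDerivAt {n : ℝ → ℝ} {a b x : ℝ}
    (hn : IntervalIntegrable n volume a b) (hx : x ∈ Ioo a b)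
    (hN : HasDerivAt (fun y => ∫ σ in a..y, n σ) (n x) x) :
    Tendsto (fun z => (∫ σ in (x - z)..(x + z), n σ) / z) (𝓝[>] 0) (𝓝 (2 * n x)) := by
  have hnI : ∀ y ∈ Icc a b, IntervalIntegrable n volume a y := fun y hy =>
    hn.mono_set (uIcc_subset_uIcc left_mem_uIcc (by rwa [uIcc_of_le (hy.1.trans hy.2)]))
  have hN_symm : Tendsto (fun z => ((∫ σ in a..(x + z), n σ) - ∫ σ in a..(x - z), n σ) / z)
      (𝓝[>] 0) (𝓝 (2 * n x)) := by
    simpa [← sub_eq_add_neg, one_add_one_eq_two] using hN.tendsto_sub_div_nhdsGT 1 (-1)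
  refine hN_symm.congr' ?_
  filter_upwards [Ioo_mem_nhdsGT (lt_min (sub_pos.2 hx.1) (sub_pos.2 hx.2))] with z ⟨hz0, hz⟩
  obtain ⟨hza, hzb⟩ := lt_min_iff.1 hz
  rw [intervalIntegral.integral_interval_sub_left (hnI _ ⟨by linarith, by linarith⟩)
    (hnI _ ⟨by linarith, by linarith⟩)]

theorem tendsto_integral_horizontal_div_nhdsGT {c ξ : ℝ} (hξ : ξ ∈ Ioo 0 c) {W : ℝ × ℝ → ℝ}
    (hW : ContinuousOn W (OmegaC c)) :
    Tendsto (fun z => (∫ σ in (ξ - z)..(ξ + z), W (σ, c - ξ + z)) / z) (𝓝[>] 0)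
      (𝓝 (2 * W (ξ, c - ξ))) := by
  have hmaps : MapsTo (fun p : ℝ × ℝ => (p.1, c - ξ + p.2))
      {p | |p.1 - ξ| ≤ p.2 ∧ p.2 ≤ ξ} (OmegaC c) := by
    rintro ⟨σ, z⟩ ⟨hσz, hzξ⟩
    obtain ⟨h₁, h₂⟩ := abs_sub_le_iff.mp hσz
    exact ⟨by dsimp only; linarith, by dsimp only; linarith [hξ.2], by dsimp only; linarith⟩
  simpa using tendsto_integral_symm_div_nhdsGT hξ.1 (hW.comp (by fun_prop) hmaps)

theorem tendsto_integral_vertical_div_nhdsGT {c ξ : ℝ} (hξ : ξ ∈ Ioo 0 c) {W : ℝ × ℝ → ℝ}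
    (hW : ContinuousOn W (OmegaC c)) :
    Tendsto (fun z => (∫ τ in (c - ξ - z)..(c - ξ + z), W (ξ + z, τ)) / z) (𝓝[>] 0)
      (𝓝 (2 * W (ξ, c - ξ))) := by
  have hmaps : MapsTo (fun p : ℝ × ℝ => (ξ + p.2, p.1))
      {p | |p.1 - (c - ξ)| ≤ p.2 ∧ p.2 ≤ c - ξ} (OmegaC c) := by
    rintro ⟨τ, z⟩ ⟨hτz, hzξ⟩
    obtain ⟨h₁, h₂⟩ := abs_sub_le_iff.mp hτz
    exact ⟨by dsimp only; linarith [hξ.1], by dsimp only; linarith, by dsimp only; linarith⟩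
  simpa using tendsto_integral_symm_div_nhdsGT (sub_pos.2 hξ.2) (hW.comp (by fun_prop) hmaps)

theorem continuousOn_deriv_mul_OmegaC {c : ℝ} {lam : ℝ → ℝ} {u : ℝ → ℝ → ℝ}
    (hlam : ContinuousOn (deriv lam) (Ici c))
    (hu : ContinuousOn (fun p : ℝ × ℝ => u p.1 p.2) (OmegaC c)) :
    ContinuousOn (fun p : ℝ × ℝ => deriv lam (p.1 + p.2) * u p.1 p.2) (OmegaC c) :=
  (hlam.comp (by fun_prop) fun p hp => hp.2.2).mul hu

theorem Aop_eq_of_le {c s t : ℝ} (hs : s ≤ c) (ht : t ≤ c) (lam g h f n : ℝ → ℝ)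
    (u : ℝ → ℝ → ℝ) :
    Aop c lam g h f n u s t = (1 / (2 * lam (s + t))) *
      (lam c * (f s + f (c - t) + ∫ σ in (c - t)..s, n σ)
        + (∫ σ in (c - t)..s, deriv lam (σ + t) * u σ t)
        + ∫ τ in (c - s)..t, deriv lam (s + τ) * u s τ) := by
  rw [Aop, Gbd, if_pos hs, if_pos ht, max_eq_left (by linarith), max_eq_left (by linarith),
    min_eq_right hs]
  ring

theorem Aop_cauchy_segment {c s : ℝ} (hs : s ∈ Icc 0 c) {lam : ℝ → ℝ} (hlam : lam c ≠ 0)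
    (g h f n : ℝ → ℝ) (u : ℝ → ℝ → ℝ) :
    Aop c lam g h f n u s (c - s) = f s := by
  rw [Aop_eq_of_le hs.2 (by linarith [hs.1]), sub_sub_cancel, add_sub_cancel,
    intervalIntegral.integral_same, intervalIntegral.integral_same,
    intervalIntegral.integral_same]
  field_simp
  ring

theorem Aop_zero_right {c s : ℝ} (hc : 0 ≤ c) (hs : c ≤ s) {lam g f : ℝ → ℝ}
    (hlam : lam s ≠ 0) (hcorner : g c = f c) (h n : ℝ → ℝ) {u : ℝ → ℝ → ℝ}
    (hu : ∀ σ ∈ Icc c s, u σ 0 = g σ) :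
    Aop c lam g h f n u s 0 = g s := by
  have hgu : ∫ σ in c..s, deriv lam (σ + 0) * u σ 0 = ∫ σ in c..s, g σ * deriv lam σ := by
    refine intervalIntegral.integral_congr fun σ hσ => ?_
    rw [uIcc_of_le hs] at hσ
    rw [add_zero, hu σ hσ, mul_comm]
  rw [Aop, Gbd, add_zero, sub_zero, max_eq_left hc, min_eq_left hs,
    max_eq_right (by linarith : c - s ≤ 0), intervalIntegral.integral_same,
    intervalIntegral.integral_same, hgu, if_pos hc, hcorner]
  rcases hs.eq_or_lt with rfl | hlt
  · rw [if_pos le_rfl, intervalIntegral.integral_same, hcorner]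
    field_simp
    ring
  · rw [if_neg hlt.not_ge]
    field_simp
    ring

theorem Aop_zero_left {c t : ℝ} (hc : 0 ≤ c) (ht : c ≤ t) {lam h f : ℝ → ℝ}
    (hlam : lam t ≠ 0) (hcorner : h c = f 0) (g n : ℝ → ℝ) {u : ℝ → ℝ → ℝ}
    (hu : ∀ τ ∈ Icc c t, u 0 τ = h τ) :
    Aop c lam g h f n u 0 t = h t := by
  have hhu : ∫ τ in c..t, deriv lam (0 + τ) * u 0 τ = ∫ τ in c..t, h τ * deriv lam τ := by
    refine intervalIntegral.integral_congr fun τ hτ => ?_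
    rw [uIcc_of_le ht] at hτ
    rw [zero_add, hu τ hτ, mul_comm]
  rw [Aop, Gbd, zero_add, sub_zero, max_eq_left hc, min_eq_right hc,
    max_eq_right (by linarith : c - t ≤ 0), intervalIntegral.integral_same,
    intervalIntegral.integral_same, hhu, if_pos hc, hcorner]
  rcases ht.eq_or_lt with rfl | hlt
  · rw [if_pos le_rfl, intervalIntegral.integral_same, sub_self, hcorner]
    field_simp
    ring
  · rw [if_neg hlt.not_ge]
    field_simp
    ring

theorem Aop_normal_slope_eq {c ξ z : ℝ} (hξ : ξ ∈ Icc 0 c) (hz : 0 < z) (hzξ : z ≤ ξ)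
    (hzc : ξ + z ≤ c) {lam : ℝ → ℝ} (hlamc : lam c ≠ 0) (hlamz : lam (c + 2 * z) ≠ 0) (g h f n : ℝ → ℝ)
    (u : ℝ → ℝ → ℝ) :
    (Aop c lam g h f n u (ξ + z) (c - ξ + z) - Aop c lam g h f n u ξ (c - ξ)) / z
      = 1 / (2 * lam (c + 2 * z)) *
        (lam c * ((f (ξ + z) - f ξ) / z - (f ξ - f (ξ - z)) / z
            + (∫ σ in (ξ - z)..(ξ + z), n σ) / z)
          + (∫ σ in (ξ - z)..(ξ + z), deriv lam (σ + (c - ξ + z)) * u σ (c - ξ + z)) / z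
          + (∫ τ in (c - ξ - z)..(c - ξ + z), deriv lam (ξ + z + τ) * u (ξ + z) τ) / z
          + 2 * f ξ * ((lam c - lam (c + 2 * z)) / z)) := by
  rw [Aop_cauchy_segment hξ hlamc, Aop_eq_of_le hzc (by linarith),
    show c - (c - ξ + z) = ξ - z by ring, show c - (ξ + z) = c - ξ - z by ring,
    show ξ + z + (c - ξ + z) = c + 2 * z by ring]
  field_simp
  ring

theorem tendsto_Aop_normal_slope {c ξ : ℝ} (hξ : ξ ∈ Ioo 0 c) {lam g h f n : ℝ → ℝ}
    {u : ℝ → ℝ → ℝ} {d : ℝ}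
    (hlam : HasDerivAt lam (deriv lam c) c) (hlam' : ContinuousOn (deriv lam) (Ici c))
    (hlam0 : ∀ v ∈ Ici c, lam v ≠ 0)
    (hf : HasDerivAt f d ξ) (hn : IntervalIntegrable n volume 0 c)
    (hN : HasDerivAt (fun x => ∫ σ in (0:ℝ)..x, n σ) (n ξ) ξ)
    (hu : ContinuousOn (fun p : ℝ × ℝ => u p.1 p.2) (OmegaC c)) (huξ : u ξ (c - ξ) = f ξ) :
    Tendsto
      (fun z => (Aop c lam g h f n u (ξ + z) (c - ξ + z) - Aop c lam g h f n u ξ (c - ξ)) / z)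
      (𝓝[>] 0) (𝓝 (n ξ)) := by
  have hlamc : lam c ≠ 0 := hlam0 c self_mem_Ici
  have hW := continuousOn_deriv_mul_OmegaC hlam' hu
  have hWξ : deriv lam (ξ + (c - ξ)) * u ξ (c - ξ) = deriv lam c * f ξ := by
    rw [add_sub_cancel, huξ]
  have hf_right : Tendsto (fun z => (f (ξ + z) - f ξ) / z) (𝓝[>] 0) (𝓝 d) := by
    simpa using hf.tendsto_sub_div_nhdsGT 1 0
  have hf_left : Tendsto (fun z => (f ξ - f (ξ - z)) / z) (𝓝[>] 0) (𝓝 d) := by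
    simpa [← sub_eq_add_neg] using hf.tendsto_sub_div_nhdsGT 0 (-1)
  have hn_symm := tendsto_integral_symm_div_nhdsGT_of_hasDerivAt hn hξ hN
  have hlam_quot : Tendsto (fun z => (lam c - lam (c + 2 * z)) / z) (𝓝[>] 0)
      (𝓝 (-(2 * deriv lam c))) := by
    simpa using hlam.tendsto_sub_div_nhdsGT 0 2
  have hinv : Tendsto (fun z => 1 / (2 * lam (c + 2 * z))) (𝓝[>] 0) (𝓝 (1 / (2 * lam c))) := by
    have hlin : Tendsto (fun z : ℝ => c + 2 * z) (𝓝[>] 0) (𝓝 c) :=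
      ((show Continuous fun z : ℝ => c + 2 * z by fun_prop).tendsto' 0 c
        (by simp)).mono_left nhdsWithin_le_nhds
    exact tendsto_const_nhds.div ((hlam.continuousAt.tendsto.comp hlin).const_mul 2)
      (mul_ne_zero two_ne_zero hlamc)
  have hlim := hinv.mul (((((hf_right.sub hf_left).add hn_symm).const_mul (lam c)).add
    (hWξ ▸ tendsto_integral_horizontal_div_nhdsGT hξ hW)).add
    (hWξ ▸ tendsto_integral_vertical_div_nhdsGT hξ hW) |>.add (hlam_quot.const_mul (2 * f ξ)))
  rw [show 1 / (2 * lam c) * (lam c * (d - d + 2 * n ξ) + 2 * (deriv lam c * f ξ)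
      + 2 * (deriv lam c * f ξ) + 2 * f ξ * -(2 * deriv lam c)) = n ξ by
    field_simp; ring] at hlim
  refine hlim.congr' ?_
  filter_upwards [Ioo_mem_nhdsGT (lt_min hξ.1 (sub_pos.2 hξ.2))] with z ⟨hz0, hz⟩
  obtain ⟨hzξ, hzc⟩ := lt_min_iff.1 hz
  exact (Aop_normal_slope_eq (Ioo_subset_Icc_self hξ) hz0 hzξ.le (by linarith) hlamc
    (hlam0 _ (by simp only [mem_Ici]; linarith)) g h f n u).symm

theorem improvement_lemma_general
    (c : ℝ) (hc : 0 < c) (lam : ℝ → ℝ)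
    (hlam : ContDiffOn ℝ 1 lam (Set.Ioi 0)) (hpos : ∀ u : ℝ, 0 < u → 0 < lam u)
    (g h f n : ℝ → ℝ)
    (hf : ∃ f' : ℝ → ℝ, IntegrableOn f' (Set.Icc 0 c) ∧
      ∀ ξ ∈ Set.Icc 0 c, f ξ = f 0 + ∫ σ in (0:ℝ)..ξ, f' σ)
    (hn : IntegrableOn n (Set.Icc 0 c))
    (hcorner₁ : g c = f c) (hcorner₂ : h c = f 0)
    (x₀ : ℝ → ℝ → ℝ)
    (hx₀ : ContinuousOn (fun p : ℝ × ℝ => x₀ p.1 p.2) (OmegaC c))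
    (hD₁ : ∀ s : ℝ, c ≤ s → x₀ s 0 = g s)
    (hD₂ : ∀ t : ℝ, c ≤ t → x₀ 0 t = h t)
    (hDC : ∀ s ∈ Set.Icc 0 c, x₀ s (c - s) = f s) :
    (∀ s : ℝ, c ≤ s → Aop c lam g h f n x₀ s 0 = g s) ∧
    (∀ t : ℝ, c ≤ t → Aop c lam g h f n x₀ 0 t = h t) ∧
    (∀ s ∈ Set.Icc 0 c, Aop c lam g h f n x₀ s (c - s) = f s) ∧
    (∀ᵐ ξ ∂(volume.restrict (Set.Ioo 0 c)),
      Filter.Tendsto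
        (fun z => (Aop c lam g h f n x₀ (ξ + z) (c - ξ + z)
          - Aop c lam g h f n x₀ ξ (c - ξ)) / z)
        (nhdsWithin 0 (Set.Ioi 0)) (nhds (n ξ))) := by
  have hlam0 : ∀ v ∈ Ici c, lam v ≠ 0 := fun v hv => (hpos v (hc.trans_le hv)).ne'
  refine ⟨fun s hs => Aop_zero_right hc.le hs (hlam0 s hs) hcorner₁ h n fun σ hσ => hD₁ σ hσ.1,
    fun t ht => Aop_zero_left hc.le ht (hlam0 t ht) hcorner₂ g n fun τ hτ => hD₂ τ hτ.1,
    fun s hs => Aop_cauchy_segment hs (hlam0 c self_mem_Ici) g h f n x₀, ?_⟩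
  obtain ⟨f', hf', hf_eq⟩ := hf
  have hlam_c : HasDerivAt lam (deriv lam c) c :=
    ((hlam.contDiffAt (Ioi_mem_nhds hc)).differentiableAt one_ne_zero).hasDerivAt
  have hlam' : ContinuousOn (deriv lam) (Ici c) :=
    (hlam.continuousOn_deriv_of_isOpen isOpen_Ioi le_rfl).mono (Ici_subset_Ioi.2 hc)
  filter_upwards [ae_restrict_mem measurableSet_Ioo,
    ae_restrict_of_ae (ae_hasDerivAt_of_eq_add_integral hf' hf_eq),
    ae_restrict_of_ae (ae_hasDerivAt_of_eq_add_integral hn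
      (f := fun x => ∫ σ in (0:ℝ)..x, n σ) (by simp))] with ξ hξ hfξ hNξ
  exact tendsto_Aop_normal_slope hξ hlam_c hlam' hlam0 (hfξ hξ)
    ((intervalIntegrable_iff_integrableOn_Icc_of_le hc.le).2 hn) (hNξ hξ) hx₀
    (hDC ξ (Ioo_subset_Icc_self hξ))

/-- The improvement property of `𝒜`: if `x₀` is continuous on `Ω̄_c`
and satisfies the Dirichlet data `{g, h, f}`, then `x₁ = 𝒜x₀` satisfies the same
Dirichlet data and, in addition, its normal difference quotient along the Cauchy
segment exists and equals `n(ξ)` for almost every `ξ ∈ (0,c)`. -/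
theorem improvement_lemma
    (c : ℝ) (hc : 0 < c) (lam : ℝ → ℝ)
    (hlam : ContDiffOn ℝ 1 lam (Set.Ioi 0)) (hpos : ∀ u : ℝ, 0 < u → 0 < lam u)
    (g h f n : ℝ → ℝ)
    (hg : ContinuousOn g (Set.Ici c)) (hh : ContinuousOn h (Set.Ici c))
    (hf : ∃ f' : ℝ → ℝ, IntegrableOn f' (Set.Icc 0 c) ∧
      ∀ ξ ∈ Set.Icc 0 c, f ξ = f 0 + ∫ σ in (0:ℝ)..ξ, f' σ)
    (hn : IntegrableOn n (Set.Icc 0 c))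
    (hcorner₁ : g c = f c) (hcorner₂ : h c = f 0)
    (x₀ : ℝ → ℝ → ℝ)
    (hx₀ : ContinuousOn (fun p : ℝ × ℝ => x₀ p.1 p.2) (OmegaC c))
    (hD₁ : ∀ s : ℝ, c ≤ s → x₀ s 0 = g s)
    (hD₂ : ∀ t : ℝ, c ≤ t → x₀ 0 t = h t)
    (hDC : ∀ s ∈ Set.Icc 0 c, x₀ s (c - s) = f s) :
    (∀ s : ℝ, c ≤ s → Aop c lam g h f n x₀ s 0 = g s) ∧
    (∀ t : ℝ, c ≤ t → Aop c lam g h f n x₀ 0 t = h t) ∧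
    (∀ s ∈ Set.Icc 0 c, Aop c lam g h f n x₀ s (c - s) = f s) ∧
    (∀ᵐ ξ ∂(volume.restrict (Set.Ioo 0 c)),
      Filter.Tendsto
        (fun z => (Aop c lam g h f n x₀ (ξ + z) (c - ξ + z)
          - Aop c lam g h f n x₀ ξ (c - ξ)) / z)
        (nhdsWithin 0 (Set.Ioi 0)) (nhds (n ξ))) :=
  improvement_lemma_general c hc lam hlam hpos g h f n hf hn hcorner₁ hcorner₂ x₀ hx₀ hD₁ hD₂ hDC
end

section
/- Let S, T > 0, let M_H > 0, and let 𝓗 : (0,S]×(0,T] → ℝ be a measurable function with |𝓗(s,t)| ≤ M_H for all (s,t) in its domain. Let λ : [0, S+T] → ℝ be continuously differentiable with λ(0) = 0 and λ'(u) > 0 for all u ∈ [0, S+T]. Define f(s,t) = −(1/(2λ(s+t)))·∫₀^s ∫₀^t 𝓗(σ,τ) dτ dσ for (s,t) ∈ [0,S]×[0,T] with s+t > 0, and f(0,0) = 0. Then f is Lipschitz continuous on [0,S]×[0,T] and vanishes on the coordinate axes: f(s,0) = 0 for all s ∈ [0,S] and f(0,t) = 0 for all t ∈ [0,T]. -/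
/-!
Write `R(s,t) = ∫₀^s ∫₀^t 𝓗`, so that `f = -R / (2λ(s+t))` on the whole rectangle (at the origin
too, since `λ 0 = 0` and `x / 0 = 0` in Lean). With `u = s + t`, the bound `|𝓗| ≤ M_H` gives
`R(p) = O(u(p)²)` and `R(p) - R(q) = O(max(u(p), u(q)) · |p - q|)`, while `λ' ≥ c > 0` on
`[0, S+T]` gives `λ(u) ≥ c u`, and `λ` is Lipschitz there. In
`R p / λ p - R q / λ q = (R p - R q) / λ q + R p (λ q - λ p) / (λ p λ q)`
the powers of `u` then cancel and both terms are `O(|p - q|)`.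
-/

open MeasureTheory Set Interval

lemma uIoc_subset_Ioc_of_mem_Icc {a b T : ℝ} (ha : a ∈ Icc 0 T) (hb : b ∈ Icc 0 T) :
    Ι a b ⊆ Ioc 0 T := fun _ hx =>
  ⟨(le_min ha.1 hb.1).trans_lt hx.1, hx.2.trans (max_le ha.2 hb.2)⟩

lemma intervalIntegrable_of_abs_le {h : ℝ → ℝ} {T M : ℝ} (hh : Measurable h)
    (hM : ∀ x ∈ Ioc 0 T, |h x| ≤ M) {a b : ℝ} (ha : a ∈ Icc 0 T) (hb : b ∈ Icc 0 T) :
    IntervalIntegrable h volume a b := by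
  have h0T : IntervalIntegrable h volume 0 T := by
    rw [intervalIntegrable_iff_integrableOn_Ioc_of_le (ha.1.trans ha.2)]
    exact Measure.integrableOn_of_bounded measure_Ioc_lt_top.ne hh.aestronglyMeasurable
      ((ae_restrict_iff' measurableSet_Ioc).2 (Filter.Eventually.of_forall hM))
  exact h0T.mono_set (uIcc_subset_uIcc (Icc_subset_uIcc ha) (Icc_subset_uIcc hb))

lemma abs_intervalIntegral_sub_le {h : ℝ → ℝ} {T M : ℝ} (hh : Measurable h)
    (hM : ∀ x ∈ Ioc 0 T, |h x| ≤ M) {a b : ℝ} (ha : a ∈ Icc 0 T) (hb : b ∈ Icc 0 T) :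
    |(∫ x in 0..b, h x) - ∫ x in 0..a, h x| ≤ M * |b - a| := by
  have h0 : (0 : ℝ) ∈ Icc 0 T := ⟨le_rfl, ha.1.trans ha.2⟩
  rw [intervalIntegral.integral_interval_sub_left (intervalIntegrable_of_abs_le hh hM h0 hb)
    (intervalIntegrable_of_abs_le hh hM h0 ha)]
  exact intervalIntegral.norm_integral_le_of_norm_le_const (f := h) fun x hx =>
    hM x (uIoc_subset_Ioc_of_mem_Icc ha hb hx)

lemma measurable_intervalIntegral_right {H : ℝ → ℝ → ℝ}
    (hH : Measurable fun p : ℝ × ℝ => H p.1 p.2) (a b : ℝ) :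
    Measurable fun σ => ∫ τ in a..b, H σ τ :=
  (hH.stronglyMeasurable.integral_prod_right' (ν := volume.restrict (Ioc a b))).measurable.sub
    (hH.stronglyMeasurable.integral_prod_right' (ν := volume.restrict (Ioc b a))).measurable

noncomputable def rectIntegral (H : ℝ → ℝ → ℝ) (s t : ℝ) : ℝ :=
  ∫ σ in (0 : ℝ)..s, ∫ τ in (0 : ℝ)..t, H σ τ

section rectIntegral

variable {H : ℝ → ℝ → ℝ} {S T M : ℝ}

lemma rectIntegral_zero_left (t : ℝ) : rectIntegral H 0 t = 0 :=
  intervalIntegral.integral_same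

lemma rectIntegral_zero_right (s : ℝ) : rectIntegral H s 0 = 0 := by
  simp [rectIntegral]

lemma abs_intervalIntegral_right_le (hH : Measurable fun p : ℝ × ℝ => H p.1 p.2)
    (hHM : ∀ s ∈ Ioc 0 S, ∀ t ∈ Ioc 0 T, |H s t| ≤ M) {σ t : ℝ} (hσ : σ ∈ Ioc 0 S)
    (ht : t ∈ Icc 0 T) : |∫ τ in (0 : ℝ)..t, H σ τ| ≤ M * t := by
  simpa [abs_of_nonneg ht.1] using abs_intervalIntegral_sub_le
    (hH.comp measurable_prodMk_left) (hHM σ hσ) ⟨le_rfl, ht.1.trans ht.2⟩ ht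

lemma abs_rectIntegral_sub_le_fst (hH : Measurable fun p : ℝ × ℝ => H p.1 p.2)
    (hHM : ∀ s ∈ Ioc 0 S, ∀ t ∈ Ioc 0 T, |H s t| ≤ M) {s s' t : ℝ} (hs : s ∈ Icc 0 S)
    (hs' : s' ∈ Icc 0 S) (ht : t ∈ Icc 0 T) :
    |rectIntegral H s t - rectIntegral H s' t| ≤ M * t * |s - s'| :=
  abs_intervalIntegral_sub_le (measurable_intervalIntegral_right hH 0 t)
    (fun _ hσ => abs_intervalIntegral_right_le hH hHM hσ ht) hs' hs

lemma abs_rectIntegral_sub_le_snd (hH : Measurable fun p : ℝ × ℝ => H p.1 p.2)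
    (hHM : ∀ s ∈ Ioc 0 S, ∀ t ∈ Ioc 0 T, |H s t| ≤ M) {s t t' : ℝ} (hs : s ∈ Icc 0 S)
    (ht : t ∈ Icc 0 T) (ht' : t' ∈ Icc 0 T) :
    |rectIntegral H s t - rectIntegral H s t'| ≤ M * |t - t'| * s := by
  have h0 : (0 : ℝ) ∈ Icc 0 S := ⟨le_rfl, hs.1.trans hs.2⟩
  have hint : ∀ t ∈ Icc 0 T, IntervalIntegrable (fun σ => ∫ τ in (0 : ℝ)..t, H σ τ) volume 0 s :=
    fun t ht => intervalIntegrable_of_abs_le (measurable_intervalIntegral_right hH 0 t)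
      (fun _ hσ => abs_intervalIntegral_right_le hH hHM hσ ht) h0 hs
  rw [rectIntegral, rectIntegral, ← intervalIntegral.integral_sub (hint t ht) (hint t' ht')]
  simpa [abs_of_nonneg hs.1] using intervalIntegral.norm_integral_le_of_norm_le_const
    (f := fun σ => (∫ τ in (0 : ℝ)..t, H σ τ) - ∫ τ in (0 : ℝ)..t', H σ τ) fun σ hσ =>
      abs_intervalIntegral_sub_le (hH.comp measurable_prodMk_left)
        (hHM σ (uIoc_subset_Ioc_of_mem_Icc h0 hs hσ)) ht' ht

lemma abs_rectIntegral_le_sq (hH : Measurable fun p : ℝ × ℝ => H p.1 p.2)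
    (hHM : ∀ s ∈ Ioc 0 S, ∀ t ∈ Ioc 0 T, |H s t| ≤ M) (hM : 0 ≤ M) {s t : ℝ}
    (hs : s ∈ Icc 0 S) (ht : t ∈ Icc 0 T) : |rectIntegral H s t| ≤ M * (s + t) ^ 2 := by
  have h := abs_rectIntegral_sub_le_fst hH hHM hs ⟨le_rfl, hs.1.trans hs.2⟩ ht
  rw [rectIntegral_zero_left, sub_zero, sub_zero, abs_of_nonneg hs.1, mul_assoc] at h
  exact h.trans (mul_le_mul_of_nonneg_left (by nlinarith [hs.1, ht.1]) hM)

lemma abs_rectIntegral_sub_le_dist (hH : Measurable fun p : ℝ × ℝ => H p.1 p.2)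
    (hHM : ∀ s ∈ Ioc 0 S, ∀ t ∈ Ioc 0 T, |H s t| ≤ M) (hM : 0 ≤ M) {p q : ℝ × ℝ}
    (hp : p ∈ Icc 0 S ×ˢ Icc 0 T) (hq : q ∈ Icc 0 S ×ˢ Icc 0 T) :
    |rectIntegral H p.1 p.2 - rectIntegral H q.1 q.2| ≤
      2 * M * max (p.1 + p.2) (q.1 + q.2) * dist p q := by
  have hfst : |p.1 - q.1| ≤ dist p q := by
    rw [Prod.dist_eq, ← Real.dist_eq]; exact le_max_left _ _
  have hsnd : |p.2 - q.2| ≤ dist p q := by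
    rw [Prod.dist_eq, ← Real.dist_eq]; exact le_max_right _ _
  have hp2 : p.2 ≤ max (p.1 + p.2) (q.1 + q.2) := le_max_of_le_left (by linarith [hp.1.1])
  have hq1 : q.1 ≤ max (p.1 + p.2) (q.1 + q.2) := le_max_of_le_right (by linarith [hq.2.1])
  have hmax : 0 ≤ max (p.1 + p.2) (q.1 + q.2) :=
    le_max_of_le_left (add_nonneg hp.1.1 hp.2.1)
  have h1 := abs_rectIntegral_sub_le_fst hH hHM hp.1 hq.1 hp.2
  have h2 := abs_rectIntegral_sub_le_snd hH hHM hq.1 hp.2 hq.2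
  calc |rectIntegral H p.1 p.2 - rectIntegral H q.1 q.2|
      ≤ |rectIntegral H p.1 p.2 - rectIntegral H q.1 p.2| +
          |rectIntegral H q.1 p.2 - rectIntegral H q.1 q.2| := abs_sub_le _ _ _
    _ ≤ M * max (p.1 + p.2) (q.1 + q.2) * dist p q +
          M * dist p q * max (p.1 + p.2) (q.1 + q.2) := by
        gcongr ?_ + ?_
        · exact h1.trans (mul_le_mul (mul_le_mul_of_nonneg_left hp2 hM) hfst (abs_nonneg _)
            (mul_nonneg hM hmax))
        · exact h2.trans (mul_le_mul (mul_le_mul_of_nonneg_left hsnd hM) hq1 hq.1.1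
            (mul_nonneg hM dist_nonneg))
    _ = 2 * M * max (p.1 + p.2) (q.1 + q.2) * dist p q := by ring

end rectIntegral

lemma abs_div_le_div_of_abs_le_mul {x ℓ u B c : ℝ} (hc : 0 < c) (hB : 0 ≤ B) (hu : 0 ≤ u)
    (hx : |x| ≤ B * u) (hℓ : c * u ≤ ℓ) : |x / ℓ| ≤ B / c := by
  rcases (mul_nonneg hc.le hu |>.trans hℓ).eq_or_lt with hℓ0 | hℓ0
  · rw [← hℓ0, div_zero, abs_zero]
    positivity
  · rw [abs_div, abs_of_pos hℓ0, div_le_div_iff₀ hℓ0 hc]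
    nlinarith

theorem lipschitzOnWith_div_of_abs_le_sq {X : Type*} [PseudoMetricSpace X] {s : Set X}
    {G ℓ u : X → ℝ} {c M K : ℝ} {C : NNReal} (hc : 0 < c) (hM : 0 ≤ M) (hK : 0 ≤ K)
    (hu : ∀ p ∈ s, 0 ≤ u p) (hℓ : ∀ p ∈ s, c * u p ≤ ℓ p) (hℓC : LipschitzOnWith C ℓ s)
    (hG : ∀ p ∈ s, |G p| ≤ M * u p ^ 2)
    (hGK : ∀ p ∈ s, ∀ q ∈ s, |G p - G q| ≤ K * max (u p) (u q) * dist p q) :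
    LipschitzOnWith (K / c + M * C / c ^ 2).toNNReal (fun p => G p / ℓ p) s := by
  refine LipschitzOnWith.of_dist_le_mul fun p hp q hq => ?_
  wlog hpq : u p ≤ u q generalizing p q
  · rw [dist_comm, dist_comm p]
    exact this q hq p hp (le_of_not_ge hpq)
  rw [Real.dist_eq, Real.coe_toNNReal _ (by positivity)]
  have hsplit : G p / ℓ p - G q / ℓ q =
      (G p - G q) / ℓ q + G p * (ℓ q - ℓ p) / (ℓ p * ℓ q) := by
    rcases (hu p hp).eq_or_lt with hup | hup
    · have hGp : G p = 0 := abs_nonpos_iff.mp (by simpa [← hup] using hG p hp)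
      simp [hGp, neg_div]
    · have hℓp : 0 < ℓ p := (mul_pos hc hup).trans_le (hℓ p hp)
      have hℓq : 0 < ℓ q := (mul_pos hc (hup.trans_le hpq)).trans_le (hℓ q hq)
      field_simp
      ring
  have hfirst : |(G p - G q) / ℓ q| ≤ K * dist p q / c := by
    refine abs_div_le_div_of_abs_le_mul hc (by positivity) (hu q hq) ?_ (hℓ q hq)
    simpa [max_eq_right hpq, mul_right_comm] using hGK p hp q hq
  have hsecond : |G p * (ℓ q - ℓ p) / (ℓ p * ℓ q)| ≤ M * C * dist p q / c ^ 2 := by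
    refine abs_div_le_div_of_abs_le_mul (by positivity) (by positivity)
      (mul_nonneg (hu p hp) (hu q hq)) ?_ ?_
    · rw [abs_mul, abs_sub_comm, ← Real.dist_eq]
      calc |G p| * dist (ℓ p) (ℓ q) ≤ M * u p ^ 2 * (C * dist p q) :=
            mul_le_mul (hG p hp) (hℓC.dist_le_mul p hp q hq) dist_nonneg
              (mul_nonneg hM (sq_nonneg _))
        _ ≤ M * C * dist p q * (u p * u q) := by
            have := mul_le_mul_of_nonneg_left hpq (hu p hp)
            have : 0 ≤ M * C * dist p q := by positivity
            nlinarith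
    · calc c ^ 2 * (u p * u q) = (c * u p) * (c * u q) := by ring
        _ ≤ ℓ p * ℓ q := mul_le_mul (hℓ p hp) (hℓ q hq) (mul_nonneg hc.le (hu q hq))
            ((mul_nonneg hc.le (hu p hp)).trans (hℓ p hp))
  calc |G p / ℓ p - G q / ℓ q| ≤ K * dist p q / c + M * C * dist p q / c ^ 2 := by
        rw [hsplit]; exact (abs_add_le _ _).trans (add_le_add hfirst hsecond)
    _ = (K / c + M * C / c ^ 2) * dist p q := by ring

lemma exists_pos_mul_le_of_deriv_pos {g : ℝ → ℝ} {a : ℝ} (hg : ContDiff ℝ 1 g) (hg0 : g 0 = 0)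
    (ha : 0 ≤ a) (hpos : ∀ u ∈ Icc 0 a, 0 < deriv g u) : ∃ c > 0, ∀ u ∈ Icc 0 a, c * u ≤ g u := by
  have h0 : (0 : ℝ) ∈ Icc 0 a := ⟨le_rfl, ha⟩
  obtain ⟨u₀, hu₀, hmin⟩ := isCompact_Icc.exists_isMinOn ⟨0, h0⟩
    (hg.continuous_deriv le_rfl).continuousOn
  refine ⟨deriv g u₀, hpos u₀ hu₀, fun u hu => ?_⟩
  simpa [hg0] using (convex_Icc 0 a).mul_sub_le_image_sub_of_le_deriv
    hg.continuous.continuousOn (hg.differentiable one_ne_zero).differentiableOn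
    (fun x hx => isMinOn_iff.mp hmin x (interior_subset hx)) 0 h0 u hu hu.1

/-- Regularity of the integrated forcing term: for a bounded measurable
residual `𝓗` and `λ` continuously differentiable with `λ(0) = 0` and `λ' > 0` on
`[0, S+T]`, the forcing term
`f(s,t) = −(1/(2λ(s+t)))·∫₀^s ∫₀^t 𝓗(σ,τ) dτ dσ` (with `f(0,0) = 0`)
is Lipschitz continuous on `[0,S]×[0,T]` and vanishes on the coordinate axes. -/
theorem integrated_forcing_lipschitz
    (S T M_H : ℝ) (hS : 0 < S) (hT : 0 < T) (hM : 0 < M_H)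
    (H : ℝ → ℝ → ℝ) (hHmeas : Measurable (fun p : ℝ × ℝ => H p.1 p.2))
    (hHbd : ∀ s ∈ Set.Ioc 0 S, ∀ t ∈ Set.Ioc 0 T, |H s t| ≤ M_H)
    (lam : ℝ → ℝ) (hlam : ContDiff ℝ 1 lam) (h0 : lam 0 = 0)
    (hpos : ∀ u ∈ Set.Icc 0 (S + T), 0 < deriv lam u)
    (f : ℝ → ℝ → ℝ)
    (hfdef : ∀ s ∈ Set.Icc 0 S, ∀ t ∈ Set.Icc 0 T, 0 < s + t →
      f s t = -(1 / (2 * lam (s + t))) * ∫ σ in (0:ℝ)..s, ∫ τ in (0:ℝ)..t, H σ τ)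
    (hf00 : f 0 0 = 0) :
    (∃ L : NNReal, LipschitzOnWith L (fun p : ℝ × ℝ => f p.1 p.2)
      (Set.Icc 0 S ×ˢ Set.Icc 0 T)) ∧
    (∀ s ∈ Set.Icc (0:ℝ) S, f s 0 = 0) ∧ (∀ t ∈ Set.Icc (0:ℝ) T, f 0 t = 0) := by
  obtain ⟨c, hc, hlam_ge⟩ := exists_pos_mul_le_of_deriv_pos hlam h0 (by linarith) hpos
  obtain ⟨K, hK⟩ := hlam.contDiffOn.exists_lipschitzOnWith one_ne_zero (convex_Icc 0 (S + T))
    isCompact_Icc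
  have hsum : MapsTo (fun p : ℝ × ℝ => p.1 + p.2) (Icc 0 S ×ˢ Icc 0 T) (Icc 0 (S + T)) :=
    fun p hp => ⟨add_nonneg hp.1.1 hp.2.1, add_le_add hp.1.2 hp.2.2⟩
  have hf : ∀ p ∈ Icc 0 S ×ˢ Icc 0 T,
      f p.1 p.2 = -rectIntegral H p.1 p.2 / 2 / lam (p.1 + p.2) := by
    rintro ⟨s, t⟩ ⟨hs, ht⟩
    dsimp only at hs ht ⊢
    rcases (add_nonneg hs.1 ht.1).eq_or_lt with hst | hst
    · obtain ⟨rfl, rfl⟩ : s = 0 ∧ t = 0 := by constructor <;> linarith [hs.1, ht.1]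
      simp [hf00, h0]
    · rw [hfdef s hs t ht hst, rectIntegral]
      ring
  have hlip := lipschitzOnWith_div_of_abs_le_sq (G := fun p => -rectIntegral H p.1 p.2 / 2)
    hc (half_pos hM).le hM.le (fun p hp => add_nonneg hp.1.1 hp.2.1)
    (fun p hp => hlam_ge _ (hsum hp))
    (hK.comp (LipschitzWith.prod_fst.add LipschitzWith.prod_snd).lipschitzOnWith hsum)
    (fun p hp => by
      rw [abs_div, abs_neg, abs_two]
      linarith [abs_rectIntegral_le_sq hHmeas hHbd hM.le hp.1 hp.2])
    (fun p hp q hq => by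
      rw [← sub_div, neg_sub_neg, abs_div, abs_sub_comm, abs_two]
      linarith [abs_rectIntegral_sub_le_dist hHmeas hHbd hM.le hp hq])
  refine ⟨⟨_, fun p hp q hq => by simpa only [hf p hp, hf q hq] using hlip hp hq⟩,
    fun s hs => ?_, fun t ht => ?_⟩
  · simp [hf (s, 0) ⟨hs, le_rfl, hT.le⟩, rectIntegral_zero_right]
  · simp [hf (0, t) ⟨⟨le_rfl, hS.le⟩, ht⟩, rectIntegral_zero_left]
end

section
/- Let S, T > 0 and let λ : [0, S+T] → ℝ satisfy λ(0) = 0, λ continuously differentiable on [0, S+T] (one-sided derivatives at the endpoints), and λ'(u) > 0 for all u ∈ [0, S+T]. Let R = [0,S]×[0,T] and let C₀(R) denote the space of continuous functions on R vanishing on the axes s = 0 and t = 0. Then for every f ∈ C₀(R) there exists a unique x ∈ C₀(R) satisfying, for every (s,t) ∈ R with s + t > 0, the singular Volterra equation x(s,t) = f(s,t) + ∫₀^s (λ'(σ+t)/(2λ(s+t)))·x(σ,t) dσ + ∫₀^t (λ'(s+τ)/(2λ(s+t)))·x(s,τ) dτ. -/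
/-!
Write `V x (s, t)` for the two integrals. Integrating `λ'` against `|x|` along the segments
`[0, s] × {t}` and `{s} × [0, t]` gives `|V x (s, t)| ≤ ρ(s, t) ‖x‖` with
`ρ(s, t) = (2λ(s + t) - λ(s) - λ(t)) / (2λ(s + t))`. If `0 < m ≤ λ' ≤ M` on `[0, S + T]`, then
`λ(s) + λ(t) ≥ m (s + t) ≥ (m / M) λ(s + t)`, so `ρ ≤ 1 - m / (2M) < 1` and `x ↦ f + V x` is a
contraction of `C₀(R)`. The singularity only affects continuity at the origin, where the same
estimate with `ρ ≤ 1` shows that `V x` tends to `0` whenever `x(0, 0) = 0`. Banach's fixed point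
theorem gives existence and uniqueness.
-/

open Set Function MeasureTheory intervalIntegral Filter Topology
open scoped NNReal

namespace Corrector

noncomputable section

def correctorOp (lam : ℝ → ℝ) (x : ℝ → ℝ → ℝ) (s t : ℝ) : ℝ :=
  (∫ σ in (0:ℝ)..s, deriv lam (σ + t) / (2 * lam (s + t)) * x σ t) +
    ∫ τ in (0:ℝ)..t, deriv lam (s + τ) / (2 * lam (s + t)) * x s τ

def correctorRatio (lam : ℝ → ℝ) (s t : ℝ) : ℝ :=
  (2 * lam (s + t) - lam s - lam t) / (2 * lam (s + t))

lemma abs_integral_deriv_mul_le {F F' g : ℝ → ℝ} {a b C : ℝ} (hab : a ≤ b)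
    (hF : ∀ u ∈ Icc a b, HasDerivAt F (F' u) u) (hF' : ContinuousOn F' (Icc a b))
    (hF'_nonneg : ∀ u ∈ Icc a b, 0 ≤ F' u) (hg : ∀ u ∈ Icc a b, |g u| ≤ C) :
    |∫ u in a..b, F' u * g u| ≤ C * (F b - F a) := by
  have hint : IntervalIntegrable F' volume a b :=
    (hF'.mono (uIcc_of_le hab).subset).intervalIntegrable
  rw [← Real.norm_eq_abs]
  calc ‖∫ u in a..b, F' u * g u‖
      ≤ ∫ u in a..b, F' u * C := by
        refine norm_integral_le_of_norm_le hab (ae_of_all _ fun u hu => ?_) (hint.mul_const C)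
        rw [Real.norm_eq_abs, abs_mul, abs_of_nonneg (hF'_nonneg u (Ioc_subset_Icc_self hu))]
        exact mul_le_mul_of_nonneg_left (hg u (Ioc_subset_Icc_self hu))
          (hF'_nonneg u (Ioc_subset_Icc_self hu))
    _ = C * (F b - F a) := by
        rw [intervalIntegral.integral_mul_const, integral_eq_sub_of_hasDerivAt
          (fun u hu => hF u (uIcc_of_le hab ▸ hu)) hint, mul_comm]

section Monotone

variable {lam : ℝ → ℝ} {a : ℝ}

lemma lam_nonneg (hlam : Differentiable ℝ lam) (h0 : lam 0 = 0)
    (hderiv : ∀ u ∈ Icc 0 a, 0 ≤ deriv lam u) {v : ℝ} (hv : v ∈ Icc 0 a) : 0 ≤ lam v :=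
  h0 ▸ monotoneOn_of_deriv_nonneg (convex_Icc 0 a) hlam.continuous.continuousOn
    hlam.differentiableOn (fun u hu => hderiv u (interior_subset hu))
    ⟨le_rfl, hv.1.trans hv.2⟩ hv hv.1

lemma lam_pos (hlam : ContinuousOn lam (Icc 0 a)) (h0 : lam 0 = 0)
    (hpos : ∀ u ∈ Icc 0 a, 0 < deriv lam u) {v : ℝ} (hv : v ∈ Ioc 0 a) : 0 < lam v :=
  h0 ▸ strictMonoOn_of_deriv_pos (convex_Icc 0 a) hlam
    (fun u hu => hpos u (interior_subset hu)) ⟨le_rfl, hv.1.le.trans hv.2⟩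
    (Ioc_subset_Icc_self hv) hv.1

lemma exists_correctorRatio_le (hlam : ContDiff ℝ 1 lam) (h0 : lam 0 = 0) (ha : 0 ≤ a)
    (hpos : ∀ u ∈ Icc 0 a, 0 < deriv lam u) :
    ∃ q : ℝ≥0, q < 1 ∧ ∀ s t, 0 ≤ s → 0 ≤ t → s + t ≤ a → correctorRatio lam s t ≤ q := by
  have hcont : ContinuousOn (deriv lam) (Icc 0 a) :=
    (hlam.continuous_deriv le_rfl).continuousOn
  obtain ⟨um, hum, hmin⟩ := isCompact_Icc.exists_isMinOn (nonempty_Icc.2 ha) hcont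
  obtain ⟨uM, huM, hmax⟩ := isCompact_Icc.exists_isMaxOn (nonempty_Icc.2 ha) hcont
  set m := deriv lam um
  set M := deriv lam uM
  have hm : 0 < m := hpos um hum
  have hmM : m ≤ M := hmin huM
  have hM : 0 < M := hm.trans_le hmM
  have hslope {v : ℝ} (hv : v ∈ Icc 0 a) : m * v ≤ lam v ∧ lam v ≤ M * v := by
    have hD := (hlam.differentiable one_ne_zero).differentiableOn (s := interior (Icc 0 a))
    have h0a : (0 : ℝ) ∈ Icc 0 a := ⟨le_rfl, ha⟩
    constructor
    · simpa [h0] using (convex_Icc 0 a).mul_sub_le_image_sub_of_le_deriv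
        hlam.continuous.continuousOn hD (fun u hu => hmin (interior_subset hu)) 0 h0a v hv hv.1
    · simpa [h0] using (convex_Icc 0 a).image_sub_le_mul_sub_of_deriv_le
        hlam.continuous.continuousOn hD (fun u hu => hmax (interior_subset hu)) 0 h0a v hv hv.1
  refine ⟨(1 - m / (2 * M)).toNNReal, Real.toNNReal_lt_one.2 (by
    linarith [div_pos hm (mul_pos two_pos hM)]), fun s t hs ht hst => ?_⟩
  rcases (add_nonneg hs ht).eq_or_lt with h | h
  · obtain ⟨rfl, rfl⟩ := (add_eq_zero_iff_of_nonneg hs ht).1 h.symm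
    simp [correctorRatio, h0]
  · refine le_trans ?_ (Real.le_coe_toNNReal _)
    obtain ⟨hms, -⟩ := hslope ⟨hs, by linarith⟩
    obtain ⟨hmt, -⟩ := hslope ⟨ht, by linarith⟩
    obtain ⟨hmst, hMst⟩ := hslope ⟨h.le, hst⟩
    have hL : 0 < lam (s + t) := (mul_pos hm h).trans_le hmst
    have key : m / (2 * M) * (2 * lam (s + t)) ≤ lam s + lam t := by
      rw [div_mul_eq_mul_div, div_le_iff₀ (by positivity)]
      nlinarith
    rw [correctorRatio, div_le_iff₀ (by positivity)]
    linarith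

end Monotone

section Operator

variable {lam : ℝ → ℝ}

lemma abs_correctorOp_le (hlam : ContDiff ℝ 1 lam) {g : ℝ → ℝ → ℝ} {s t C : ℝ}
    (hs : 0 ≤ s) (ht : 0 ≤ t) (hderiv : ∀ u ∈ Icc 0 (s + t), 0 ≤ deriv lam u)
    (hst : 0 ≤ lam (s + t)) (hg₁ : ∀ σ ∈ Icc 0 s, |g σ t| ≤ C)
    (hg₂ : ∀ τ ∈ Icc 0 t, |g s τ| ≤ C) :
    |correctorOp lam g s t| ≤ C * correctorRatio lam s t := by
  have hdiff : ∀ u, HasDerivAt lam (deriv lam u) u :=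
    fun u => (hlam.differentiable one_ne_zero u).hasDerivAt
  have hcont : Continuous (deriv lam) := hlam.continuous_deriv le_rfl
  have hkernel (u : ℝ) (hu : u ∈ Icc 0 (s + t)) : 0 ≤ deriv lam u / (2 * lam (s + t)) :=
    div_nonneg (hderiv u hu) (by positivity)
  have h₁ := abs_integral_deriv_mul_le (F := fun σ => lam (σ + t) / (2 * lam (s + t)))
    (g := fun σ => g σ t) hs (fun σ _ => ((hdiff _).comp_add_const σ t).div_const _)
    (by fun_prop) (fun σ hσ => hkernel _ ⟨by linarith [hσ.1], by linarith [hσ.2]⟩) hg₁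
  have h₂ := abs_integral_deriv_mul_le (F := fun τ => lam (s + τ) / (2 * lam (s + t)))
    (g := fun τ => g s τ) ht (fun τ _ => ((hdiff _).comp_const_add s τ).div_const _)
    (by fun_prop) (fun τ hτ => hkernel _ ⟨by linarith [hτ.1], by linarith [hτ.2]⟩) hg₂
  simp only [zero_add, add_zero] at h₁ h₂
  calc |correctorOp lam g s t| ≤ _ := abs_add_le _ _
    _ ≤ _ := add_le_add h₁ h₂
    _ = _ := by rw [correctorRatio]; ring

lemma correctorOp_eq_div (lam : ℝ → ℝ) (g : ℝ → ℝ → ℝ) (s t : ℝ) :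
    correctorOp lam g s t = ((∫ σ in (0:ℝ)..s, deriv lam (σ + t) * g σ t) +
      ∫ τ in (0:ℝ)..t, deriv lam (s + τ) * g s τ) / (2 * lam (s + t)) := by
  simp only [correctorOp, div_mul_eq_mul_div, intervalIntegral.integral_div, add_div]

lemma correctorOp_congr {S T : ℝ} {g h : ℝ → ℝ → ℝ}
    (hgh : ∀ σ ∈ Icc 0 S, ∀ τ ∈ Icc 0 T, g σ τ = h σ τ) {s t : ℝ}
    (hs : s ∈ Icc 0 S) (ht : t ∈ Icc 0 T) : correctorOp lam g s t = correctorOp lam h s t := by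
  unfold correctorOp
  congr 1 <;> refine integral_congr fun u hu => ?_
  · rw [uIcc_of_le hs.1] at hu
    simp only [hgh u ⟨hu.1, hu.2.trans hs.2⟩ t ht]
  · rw [uIcc_of_le ht.1] at hu
    simp only [hgh s hs u ⟨hu.1, hu.2.trans ht.2⟩]

lemma correctorOp_sub (hlam : ContDiff ℝ 1 lam) {g h : ℝ → ℝ → ℝ}
    (hg : Continuous (uncurry g)) (hh : Continuous (uncurry h)) (s t : ℝ) :
    correctorOp lam g s t - correctorOp lam h s t = correctorOp lam (g - h) s t := by
  have hd := hlam.continuous_deriv le_rfl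
  have := hg.uncurry_left s; have := hg.uncurry_right t
  have := hh.uncurry_left s; have := hh.uncurry_right t
  simp only [correctorOp, Pi.sub_apply, mul_sub]
  rw [intervalIntegral.integral_sub, intervalIntegral.integral_sub]
  · ring
  all_goals exact Continuous.intervalIntegrable (by fun_prop) _ _

lemma continuousAt_correctorOp (hlam : ContDiff ℝ 1 lam) {g : ℝ → ℝ → ℝ}
    (hg : Continuous (uncurry g)) {p : ℝ × ℝ} (hp : lam (p.1 + p.2) ≠ 0) :
    ContinuousAt (uncurry (correctorOp lam g)) p := by
  have hd := hlam.continuous_deriv le_rfl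
  have hl := hlam.continuous
  change ContinuousAt (fun p : ℝ × ℝ => correctorOp lam g p.1 p.2) p
  simp only [correctorOp_eq_div]
  refine ContinuousAt.div (Continuous.continuousAt ?_) (by fun_prop) (by simpa using hp)
  refine .add (continuous_parametric_intervalIntegral_of_continuous ?_ continuous_fst)
    (continuous_parametric_intervalIntegral_of_continuous ?_ continuous_snd)
  · exact (hd.comp (by fun_prop)).mul
      (hg.comp (f := fun q : (ℝ × ℝ) × ℝ => (q.2, q.1.2)) (by fun_prop))
  · exact (hd.comp (by fun_prop)).mul
      (hg.comp (f := fun q : (ℝ × ℝ) × ℝ => (q.1.1, q.2)) (by fun_prop))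

variable {S T : ℝ}

lemma tendsto_correctorOp_zero (hlam : ContDiff ℝ 1 lam) (h0 : lam 0 = 0)
    (hderiv : ∀ u ∈ Icc 0 (S + T), 0 ≤ deriv lam u) {g : ℝ → ℝ → ℝ}
    (hg : ContinuousAt (uncurry g) 0) (hg0 : g 0 0 = 0) :
    Tendsto (uncurry (correctorOp lam g)) (𝓝[Icc 0 S ×ˢ Icc 0 T] 0) (𝓝 0) := by
  rw [Metric.tendsto_nhdsWithin_nhds]
  intro ε hε
  obtain ⟨δ, hδ, hgδ⟩ := Metric.continuousAt_iff.1 hg (ε / 2) (half_pos hε)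
  refine ⟨δ, hδ, fun {p} hp hpδ => ?_⟩
  obtain ⟨⟨hs, hS⟩, ⟨ht, hT⟩⟩ := hp
  have hsmall {σ τ : ℝ} (hσ : |σ| ≤ |p.1|) (hτ : |τ| ≤ |p.2|) : |g σ τ| ≤ ε / 2 := by
    have hdist : dist (σ, τ) (0 : ℝ × ℝ) < δ := by
      refine lt_of_le_of_lt ?_ hpδ
      rw [dist_zero_right, dist_zero_right]
      exact max_le_max hσ hτ
    simpa [uncurry, hg0] using (hgδ hdist).le
  have hdiff := hlam.differentiable one_ne_zero
  have hL := lam_nonneg hdiff h0 hderiv ⟨add_nonneg hs ht, add_le_add hS hT⟩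
  have hLs := lam_nonneg hdiff h0 hderiv ⟨hs, by linarith⟩
  have hLt := lam_nonneg hdiff h0 hderiv ⟨ht, by linarith⟩
  have hratio : correctorRatio lam p.1 p.2 ≤ 1 :=
    div_le_one_of_le₀ (by linarith) (by positivity)
  rw [dist_zero_right, Real.norm_eq_abs]
  calc |correctorOp lam g p.1 p.2|
      ≤ ε / 2 * correctorRatio lam p.1 p.2 :=
        abs_correctorOp_le hlam hs ht
          (fun u hu => hderiv u ⟨hu.1, hu.2.trans (add_le_add hS hT)⟩) hL
          (fun σ hσ => hsmall (abs_le_abs_of_nonneg hσ.1 hσ.2) le_rfl)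
          (fun τ hτ => hsmall le_rfl (abs_le_abs_of_nonneg hτ.1 hτ.2))
    _ ≤ ε / 2 * 1 := by gcongr
    _ < ε := by linarith

lemma continuousOn_correctorOp (hlam : ContDiff ℝ 1 lam) (h0 : lam 0 = 0)
    (hpos : ∀ u ∈ Icc 0 (S + T), 0 < deriv lam u) {g : ℝ → ℝ → ℝ}
    (hg : Continuous (uncurry g)) (hg0 : g 0 0 = 0) :
    ContinuousOn (uncurry (correctorOp lam g)) (Icc 0 S ×ˢ Icc 0 T) := by
  rintro ⟨s, t⟩ hp
  obtain ⟨hs, ht⟩ : s ∈ Icc 0 S ∧ t ∈ Icc 0 T := hp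
  rcases (add_nonneg hs.1 ht.1).eq_or_lt with hst | hst
  · obtain ⟨rfl, rfl⟩ := (add_eq_zero_iff_of_nonneg hs.1 ht.1).1 hst.symm
    have hzero : uncurry (correctorOp lam g) (0, 0) = 0 := by simp [correctorOp]
    rw [ContinuousWithinAt, hzero]
    exact tendsto_correctorOp_zero hlam h0 (fun u hu => (hpos u hu).le) hg.continuousAt hg0
  · have hL := lam_pos hlam.continuous.continuousOn h0 hpos ⟨hst, add_le_add hs.2 ht.2⟩
    exact (continuousAt_correctorOp hlam hg hL.ne').continuousWithinAt

end Operator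

def VanishesOnAxes (S T : ℝ) (g : ℝ → ℝ → ℝ) : Prop :=
  (∀ s ∈ Icc (0:ℝ) S, g s 0 = 0) ∧ ∀ t ∈ Icc (0:ℝ) T, g 0 t = 0

namespace VanishesOnAxes

variable {S T : ℝ} {g h : ℝ → ℝ → ℝ}

lemma congr (hg : VanishesOnAxes S T g)
    (hgh : ∀ s ∈ Icc 0 S, ∀ t ∈ Icc 0 T, h s t = g s t) (hS : 0 ≤ S) (hT : 0 ≤ T) :
    VanishesOnAxes S T h :=
  ⟨fun s hs => (hgh s hs 0 ⟨le_rfl, hT⟩).trans (hg.1 s hs),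
    fun t ht => (hgh 0 ⟨le_rfl, hS⟩ t ht).trans (hg.2 t ht)⟩

lemma add (hg : VanishesOnAxes S T g) (hh : VanishesOnAxes S T h) :
    VanishesOnAxes S T (g + h) :=
  ⟨fun s hs => by simp [hg.1 s hs, hh.1 s hs], fun t ht => by simp [hg.2 t ht, hh.2 t ht]⟩

lemma correctorOp (lam : ℝ → ℝ) (hg : VanishesOnAxes S T g) :
    VanishesOnAxes S T (Corrector.correctorOp lam g) := by
  refine ⟨fun s hs => ?_, fun t ht => ?_⟩
  · rw [Corrector.correctorOp, integral_same, add_zero]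
    refine (integral_congr fun σ hσ => ?_).trans integral_zero
    rw [uIcc_of_le hs.1] at hσ
    simp [hg.1 σ ⟨hσ.1, hσ.2.trans hs.2⟩]
  · rw [Corrector.correctorOp, integral_same, zero_add]
    refine (integral_congr fun τ hτ => ?_).trans integral_zero
    rw [uIcc_of_le ht.1] at hτ
    simp [hg.2 τ ⟨hτ.1, hτ.2.trans ht.2⟩]

end VanishesOnAxes

section Rectangle

variable {S T : ℝ} (hS : 0 ≤ S) (hT : 0 ≤ T)

/-- Functions on `R` are extended to the plane by clamping, so that the integrals of the equation
can be formed; these integrals only sample points of `R`. -/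
def extendRect (x : C(Icc 0 S × Icc 0 T, ℝ)) (s t : ℝ) : ℝ :=
  x (projIcc 0 S hS s, projIcc 0 T hT t)

lemma continuous_extendRect (x : C(Icc 0 S × Icc 0 T, ℝ)) :
    Continuous (uncurry (extendRect hS hT x)) :=
  x.continuous.comp ((continuous_projIcc.comp continuous_fst).prodMk
    (continuous_projIcc.comp continuous_snd))

lemma extendRect_of_mem (x : C(Icc 0 S × Icc 0 T, ℝ)) {s t : ℝ} (hs : s ∈ Icc 0 S)
    (ht : t ∈ Icc 0 T) : extendRect hS hT x s t = x (⟨s, hs⟩, ⟨t, ht⟩) := by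
  rw [extendRect, projIcc_of_mem _ hs, projIcc_of_mem _ ht]

lemma abs_extendRect_sub_extendRect_le (x y : C(Icc 0 S × Icc 0 T, ℝ)) (s t : ℝ) :
    |extendRect hS hT x s t - extendRect hS hT y s t| ≤ dist x y :=
  (Real.dist_eq _ _).symm.trans_le (ContinuousMap.dist_apply_le_dist _)

/-- The space `C₀(R)`. -/
def zeroOnAxes : Set C(Icc 0 S × Icc 0 T, ℝ) := {x | VanishesOnAxes S T (extendRect hS hT x)}

lemma isClosed_zeroOnAxes : IsClosed (zeroOnAxes hS hT) := by
  simp only [zeroOnAxes, VanishesOnAxes, extendRect, ofPred_and, ofPred_forall]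
  exact .inter (isClosed_biInter fun s _ => isClosed_eq (continuous_eval_const _) continuous_const)
    (isClosed_biInter fun t _ => isClosed_eq (continuous_eval_const _) continuous_const)

def restrictRect {y : ℝ → ℝ → ℝ} (hy : ContinuousOn (uncurry y) (Icc 0 S ×ˢ Icc 0 T)) :
    C(Icc 0 S × Icc 0 T, ℝ) :=
  ⟨fun p => y p.1 p.2,
    hy.comp_continuous (f := fun p : Icc 0 S × Icc 0 T => ((p.1 : ℝ), (p.2 : ℝ))) (by fun_prop)
      fun p => ⟨p.1.2, p.2.2⟩⟩

lemma extendRect_restrictRect {y : ℝ → ℝ → ℝ}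
    (hy : ContinuousOn (uncurry y) (Icc 0 S ×ˢ Icc 0 T)) {s t : ℝ} (hs : s ∈ Icc 0 S)
    (ht : t ∈ Icc 0 T) : extendRect hS hT (restrictRect hy) s t = y s t :=
  extendRect_of_mem hS hT (restrictRect hy) hs ht

lemma restrictRect_mem_zeroOnAxes {y : ℝ → ℝ → ℝ}
    (hy : ContinuousOn (uncurry y) (Icc 0 S ×ˢ Icc 0 T)) (hy₀ : VanishesOnAxes S T y) :
    restrictRect hy ∈ zeroOnAxes hS hT :=
  hy₀.congr (fun _ hs _ ht => extendRect_restrictRect hS hT hy hs ht) hS hT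

end Rectangle

section FixedPoint

variable {S T : ℝ} (hS : 0 ≤ S) (hT : 0 ≤ T) {lam : ℝ → ℝ} {f : ℝ → ℝ → ℝ}
  (hlam : ContDiff ℝ 1 lam) (h0 : lam 0 = 0) (hpos : ∀ u ∈ Icc 0 (S + T), 0 < deriv lam u)
  (hf : ContinuousOn (uncurry f) (Icc 0 S ×ˢ Icc 0 T)) (hf₀ : VanishesOnAxes S T f)

def correctorMap (x : zeroOnAxes hS hT) : zeroOnAxes hS hT :=
  let G : C(Icc 0 S × Icc 0 T, ℝ) :=
    ⟨fun p => f p.1 p.2 + correctorOp lam (extendRect hS hT x) p.1 p.2,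
      (hf.add (continuousOn_correctorOp hlam h0 hpos (continuous_extendRect hS hT x)
        (x.2.1 0 ⟨le_rfl, hS⟩))).comp_continuous
        (f := fun p : Icc 0 S × Icc 0 T => ((p.1 : ℝ), (p.2 : ℝ))) (by fun_prop)
        fun p => ⟨p.1.2, p.2.2⟩⟩
  ⟨G, (hf₀.add (x.2.correctorOp lam)).congr
    (fun _ hs _ ht => extendRect_of_mem hS hT G hs ht) hS hT⟩

lemma extendRect_correctorMap (x : zeroOnAxes hS hT) {s t : ℝ} (hs : s ∈ Icc 0 S)
    (ht : t ∈ Icc 0 T) :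
    extendRect hS hT (correctorMap hS hT hlam h0 hpos hf hf₀ x) s t =
      f s t + correctorOp lam (extendRect hS hT x) s t :=
  extendRect_of_mem hS hT _ hs ht

lemma contractingWith_correctorMap {q : ℝ≥0} (hq1 : q < 1)
    (hq : ∀ s ∈ Icc 0 S, ∀ t ∈ Icc 0 T, correctorRatio lam s t ≤ q) :
    ContractingWith q (correctorMap hS hT hlam h0 hpos hf hf₀) := by
  refine ⟨hq1, LipschitzWith.of_dist_le_mul fun x y => ?_⟩
  rw [Subtype.dist_eq, ContinuousMap.dist_le (by positivity)]
  rintro ⟨⟨s, hs⟩, ⟨t, ht⟩⟩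
  have hderiv : ∀ u ∈ Icc 0 (s + t), 0 ≤ deriv lam u :=
    fun u hu => (hpos u ⟨hu.1, hu.2.trans (add_le_add hs.2 ht.2)⟩).le
  have hL :=
    lam_nonneg (hlam.differentiable one_ne_zero) h0 hderiv ⟨add_nonneg hs.1 ht.1, le_rfl⟩
  have hsub := correctorOp_sub hlam (lam := lam) (continuous_extendRect hS hT x)
    (continuous_extendRect hS hT y) s t
  change dist (f s t + _) (f s t + _) ≤ _
  rw [dist_add_left, Real.dist_eq, hsub, mul_comm]
  calc |correctorOp lam (extendRect hS hT x - extendRect hS hT y) s t|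
      ≤ dist x y * correctorRatio lam s t :=
        abs_correctorOp_le hlam hs.1 ht.1 hderiv hL
          (fun σ _ => abs_extendRect_sub_extendRect_le hS hT x y σ t)
          (fun τ _ => abs_extendRect_sub_extendRect_le hS hT x y s τ)
    _ ≤ dist x y * q := by gcongr; exact hq s hs t ht

lemma isFixedPt_correctorMap {y : ℝ → ℝ → ℝ}
    (hy : ContinuousOn (uncurry y) (Icc 0 S ×ˢ Icc 0 T)) (hy₀ : VanishesOnAxes S T y)
    (hyeq : ∀ s ∈ Icc 0 S, ∀ t ∈ Icc 0 T, 0 < s + t →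
      y s t = f s t + correctorOp lam y s t) :
    IsFixedPt (correctorMap hS hT hlam h0 hpos hf hf₀)
      ⟨restrictRect hy, restrictRect_mem_zeroOnAxes hS hT hy hy₀⟩ := by
  refine Subtype.ext (ContinuousMap.ext fun ⟨⟨s, hs⟩, ⟨t, ht⟩⟩ => ?_)
  change f s t + correctorOp lam (extendRect hS hT (restrictRect hy)) s t = y s t
  rw [correctorOp_congr (fun σ hσ τ hτ => extendRect_restrictRect hS hT hy hσ hτ) hs ht]
  rcases (add_nonneg hs.1 ht.1).eq_or_lt with hst | hst
  · obtain ⟨rfl, rfl⟩ := (add_eq_zero_iff_of_nonneg hs.1 ht.1).1 hst.symm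
    simp [correctorOp, hf₀.1 0 hs, hy₀.1 0 hs]
  · exact (hyeq s hs t ht hst).symm

end FixedPoint

end

end Corrector

open Set Function Corrector

/-- Existence and uniqueness for the singular corrector Volterra
equation: for `λ` continuously differentiable on `[0, S+T]` with `λ(0) = 0` and
`λ' > 0`, and any continuous `f` on `R = [0,S]×[0,T]` vanishing on the axes,
there is a unique continuous `x` on `R` vanishing on the axes that satisfies
`x(s,t) = f(s,t) + ∫₀^s (λ'(σ+t)/(2λ(s+t)))·x(σ,t) dσ
       + ∫₀^t (λ'(s+τ)/(2λ(s+t)))·x(s,τ) dτ` whenever `s + t > 0`. -/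
theorem corrector_existence_uniqueness
    (S T : ℝ) (hS : 0 < S) (hT : 0 < T) (lam : ℝ → ℝ)
    (hlam : ContDiff ℝ 1 lam) (h0 : lam 0 = 0)
    (hpos : ∀ u ∈ Set.Icc 0 (S + T), 0 < deriv lam u)
    (f : ℝ → ℝ → ℝ)
    (hf : ContinuousOn (fun p : ℝ × ℝ => f p.1 p.2) (Set.Icc 0 S ×ˢ Set.Icc 0 T))
    (hf₁ : ∀ s ∈ Set.Icc (0:ℝ) S, f s 0 = 0)
    (hf₂ : ∀ t ∈ Set.Icc (0:ℝ) T, f 0 t = 0) :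
    ∃ x : ℝ → ℝ → ℝ,
      (ContinuousOn (fun p : ℝ × ℝ => x p.1 p.2) (Set.Icc 0 S ×ˢ Set.Icc 0 T) ∧
        (∀ s ∈ Set.Icc (0:ℝ) S, x s 0 = 0) ∧
        (∀ t ∈ Set.Icc (0:ℝ) T, x 0 t = 0) ∧
        ∀ s ∈ Set.Icc (0:ℝ) S, ∀ t ∈ Set.Icc (0:ℝ) T, 0 < s + t →
          x s t = f s t
            + (∫ σ in (0:ℝ)..s, deriv lam (σ + t) / (2 * lam (s + t)) * x σ t)
            + (∫ τ in (0:ℝ)..t, deriv lam (s + τ) / (2 * lam (s + t)) * x s τ)) ∧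
      ∀ y : ℝ → ℝ → ℝ,
        ContinuousOn (fun p : ℝ × ℝ => y p.1 p.2) (Set.Icc 0 S ×ˢ Set.Icc 0 T) →
        (∀ s ∈ Set.Icc (0:ℝ) S, y s 0 = 0) →
        (∀ t ∈ Set.Icc (0:ℝ) T, y 0 t = 0) →
        (∀ s ∈ Set.Icc (0:ℝ) S, ∀ t ∈ Set.Icc (0:ℝ) T, 0 < s + t →
          y s t = f s t
            + (∫ σ in (0:ℝ)..s, deriv lam (σ + t) / (2 * lam (s + t)) * y σ t)
            + (∫ τ in (0:ℝ)..t, deriv lam (s + τ) / (2 * lam (s + t)) * y s τ)) →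
        ∀ s ∈ Set.Icc (0:ℝ) S, ∀ t ∈ Set.Icc (0:ℝ) T, y s t = x s t := by
  obtain ⟨q, hq1, hq⟩ := exists_correctorRatio_le hlam h0 (by linarith) hpos
  have hΦ := contractingWith_correctorMap hS.le hT.le hlam h0 hpos hf ⟨hf₁, hf₂⟩ hq1
    fun s hs t ht => hq s t hs.1 ht.1 (add_le_add hs.2 ht.2)
  have := (isClosed_zeroOnAxes hS.le hT.le).completeSpace_coe
  have : Nonempty (zeroOnAxes hS.le hT.le) :=
    ⟨⟨0, ⟨fun _ _ => rfl, fun _ _ => rfl⟩⟩⟩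
  obtain ⟨x, hxfix⟩ : ∃ x, IsFixedPt _ x := ⟨_, hΦ.fixedPoint_isFixedPt⟩
  have hx s (hs : s ∈ Icc 0 S) t (ht : t ∈ Icc 0 T) :
      extendRect hS.le hT.le x s t = f s t + correctorOp lam (extendRect hS.le hT.le x) s t := by
    conv_lhs => rw [← hxfix]
    exact extendRect_correctorMap hS.le hT.le hlam h0 hpos hf ⟨hf₁, hf₂⟩ x hs ht
  refine ⟨extendRect hS.le hT.le x, ⟨(continuous_extendRect _ _ _).continuousOn, x.2.1, x.2.2,
    fun s hs t ht _ => by rw [hx s hs t ht, correctorOp, add_assoc]⟩, ?_⟩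
  intro y hy hy₁ hy₂ hyeq s hs t ht
  have hfix := isFixedPt_correctorMap hS.le hT.le hlam h0 hpos hf ⟨hf₁, hf₂⟩ hy ⟨hy₁, hy₂⟩
    fun s hs t ht hst => (hyeq s hs t ht hst).trans (add_assoc _ _ _)
  have hyx : restrictRect hy = (x : C(Icc 0 S × Icc 0 T, ℝ)) :=
    congrArg Subtype.val (hΦ.fixedPoint_unique' hfix hxfix)
  exact (extendRect_restrictRect hS.le hT.le hy hs ht).symm.trans (by rw [hyx])
end

section
/- Let S, T > 0 and let λ : [0, S+T] → ℝ satisfy λ(0) = 0, λ continuously differentiable on [0, S+T], and λ'(u) > 0 for all u ∈ [0, S+T]. Define g(u) = λ(u)/u for u ∈ (0, S+T] and g(0) = λ'(0), and set m₀ = inf g and M = sup g over [0, S+T]. Then 0 < m₀ ≤ M < ∞, and for every (s,t) ∈ [0,S]×[0,T] with s + t > 0 one has ∫₀^s (λ'(σ+t)/(2λ(s+t))) dσ + ∫₀^t (λ'(s+τ)/(2λ(s+t))) dτ = 1 − (λ(s) + λ(t))/(2λ(s+t)) ≤ 1 − m₀/(2M) < 1. -/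
/-! The extension `g` is the difference quotient `dslope λ 0`, so `λ u = u • g u`. By the mean
value theorem `g > 0` on `[0, S+T]`, and `g` is continuous, so on this compact interval
`m₀ > 0` and `m₀ u ≤ λ u ≤ M u`. The two integrals are `λ(s+t) - λ(t)` and `λ(s+t) - λ(s)`
by the fundamental theorem of calculus, and the linear bounds give
`(λ s + λ t) / λ(s+t) ≥ m₀ (s+t) / (M (s+t))`. -/

open Set

lemma eq_dslope_zero_of_map_zero {f g : ℝ → ℝ} (h0 : f 0 = 0)
    (hg : ∀ u, g u = if u = 0 then deriv f 0 else f u / u) : g = dslope f 0 := by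
  funext u
  rcases eq_or_ne u 0 with rfl | hu
  · simp [hg, dslope_same]
  · simp [hg, hu, dslope_of_ne, slope_def_field, h0]

lemma Differentiable.continuous_dslope {𝕜 E : Type*} [NontriviallyNormedField 𝕜]
    [NormedAddCommGroup E] [NormedSpace 𝕜 E] {f : 𝕜 → E} (hf : Differentiable 𝕜 f) (a : 𝕜) :
    Continuous (dslope f a) :=
  continuousOn_univ.1 <| (continuousOn_dslope Filter.univ_mem).2 ⟨hf.continuous.continuousOn, hf a⟩

lemma dslope_pos_of_deriv_pos {f : ℝ → ℝ} {a b u : ℝ} (hf : Differentiable ℝ f)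
    (hpos : ∀ x ∈ Icc a b, 0 < deriv f x) (hu : u ∈ Icc a b) : 0 < dslope f a u := by
  rcases hu.1.eq_or_lt with rfl | hau
  · rw [dslope_same]; exact hpos a hu
  · obtain ⟨c, hc, hslope⟩ := exists_deriv_eq_slope f hau hf.continuous.continuousOn
      hf.differentiableOn
    rw [dslope_of_ne f hau.ne', slope_def_field, ← hslope]
    exact hpos c ⟨hc.1.le, hc.2.le.trans hu.2⟩

lemma IsCompact.sInf_image_pos {K : Set ℝ} {g : ℝ → ℝ} (hK : IsCompact K) (hne : K.Nonempty)
    (hg : ContinuousOn g K) (hpos : ∀ u ∈ K, 0 < g u) : 0 < sInf (g '' K) := by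
  obtain ⟨u, hu, hgu⟩ := (hK.image_of_continuousOn hg).sInf_mem (hne.image g)
  exact hgu ▸ hpos u hu

lemma mul_le_of_le_dslope_zero {f : ℝ → ℝ} (h0 : f 0 = 0) {m u : ℝ} (hu : 0 ≤ u)
    (hm : m ≤ dslope f 0 u) : m * u ≤ f u := by
  have := sub_smul_dslope_of_zero h0 u
  rw [sub_zero, smul_eq_mul] at this
  nlinarith

lemma le_mul_of_dslope_zero_le {f : ℝ → ℝ} (h0 : f 0 = 0) {M u : ℝ} (hu : 0 ≤ u)
    (hM : dslope f 0 u ≤ M) : f u ≤ M * u := by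
  have := sub_smul_dslope_of_zero h0 u
  rw [sub_zero, smul_eq_mul] at this
  nlinarith

lemma integral_deriv_comp_add_right {f : ℝ → ℝ} (hf : ContDiff ℝ 1 f) (s t : ℝ) :
    ∫ σ in (0:ℝ)..s, deriv f (σ + t) = f (s + t) - f t := by
  rw [intervalIntegral.integral_comp_add_right (deriv f) t, zero_add,
    intervalIntegral.integral_deriv_eq_sub (fun x _ => hf.differentiable one_ne_zero x)
      ((hf.continuous_deriv le_rfl).intervalIntegrable _ _)]

lemma integral_kernel_sum {f : ℝ → ℝ} (hf : ContDiff ℝ 1 f) {s t : ℝ} (hst : f (s + t) ≠ 0) :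
    (∫ σ in (0:ℝ)..s, deriv f (σ + t) / (2 * f (s + t)))
        + (∫ τ in (0:ℝ)..t, deriv f (s + τ) / (2 * f (s + t)))
      = 1 - (f s + f t) / (2 * f (s + t)) := by
  simp_rw [intervalIntegral.integral_div, add_comm s, integral_deriv_comp_add_right hf]
  rw [add_comm t s]
  field_simp
  ring

lemma div_le_div_of_mul_le_of_le_mul {m M a c n : ℝ} (hm : 0 ≤ m) (hc : 0 < c) (hn : 0 < n)
    (ha : m * n ≤ a) (hcM : c ≤ M * n) : m / M ≤ a / c := by
  rw [← mul_div_mul_right m M hn.ne']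
  exact div_le_div₀ ((mul_nonneg hm hn.le).trans ha) ha hc hcM

/-- The contraction estimate for the singular Volterra kernels: with
`g(u) = λ(u)/u` (`g(0) = λ'(0)`), `m₀ = inf g`, `M = sup g` over `[0, S+T]`, one
has `0 < m₀ ≤ M`, and for every `(s,t) ∈ [0,S]×[0,T]` with `s+t > 0`,
`∫₀^s λ'(σ+t)/(2λ(s+t)) dσ + ∫₀^t λ'(s+τ)/(2λ(s+t)) dτ
  = 1 − (λ(s)+λ(t))/(2λ(s+t)) ≤ 1 − m₀/(2M) < 1`. -/
theorem singular_kernel_contraction_estimate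
    (S T : ℝ) (hS : 0 < S) (hT : 0 < T) (lam : ℝ → ℝ)
    (hlam : ContDiff ℝ 1 lam) (h0 : lam 0 = 0)
    (hpos : ∀ u ∈ Set.Icc 0 (S + T), 0 < deriv lam u)
    (g : ℝ → ℝ) (hg : ∀ u : ℝ, g u = if u = 0 then deriv lam 0 else lam u / u)
    (m₀ M : ℝ)
    (hm₀ : m₀ = sInf (g '' Set.Icc 0 (S + T)))
    (hM : M = sSup (g '' Set.Icc 0 (S + T))) :
    0 < m₀ ∧ m₀ ≤ M ∧
    ∀ s ∈ Set.Icc (0:ℝ) S, ∀ t ∈ Set.Icc (0:ℝ) T, 0 < s + t →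
      ((∫ σ in (0:ℝ)..s, deriv lam (σ + t) / (2 * lam (s + t)))
          + (∫ τ in (0:ℝ)..t, deriv lam (s + τ) / (2 * lam (s + t)))
        = 1 - (lam s + lam t) / (2 * lam (s + t))) ∧
      1 - (lam s + lam t) / (2 * lam (s + t)) ≤ 1 - m₀ / (2 * M) ∧
      1 - m₀ / (2 * M) < 1 := by
  have hdiff : Differentiable ℝ lam := hlam.differentiable one_ne_zero
  obtain rfl : g = dslope lam 0 := eq_dslope_zero_of_map_zero h0 hg
  have hK : IsCompact (dslope lam 0 '' Icc 0 (S + T)) :=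
    isCompact_Icc.image (hdiff.continuous_dslope 0)
  have hne : (Icc (0:ℝ) (S + T)).Nonempty := nonempty_Icc.2 (by linarith)
  have hgpos : ∀ u ∈ Icc 0 (S + T), 0 < dslope lam 0 u := fun u hu =>
    dslope_pos_of_deriv_pos hdiff hpos hu
  have hm₀pos : 0 < m₀ :=
    hm₀ ▸ isCompact_Icc.sInf_image_pos hne (hdiff.continuous_dslope 0).continuousOn hgpos
  have hm₀M : m₀ ≤ M := hm₀ ▸ hM ▸ csInf_le_csSup (hne.image _) hK.bddBelow hK.bddAbove
  refine ⟨hm₀pos, hm₀M, fun s hs t ht hst => ?_⟩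
  have hmem : ∀ u ∈ Icc 0 (S + T), m₀ ≤ dslope lam 0 u ∧ dslope lam 0 u ≤ M := fun u hu =>
    ⟨hm₀ ▸ csInf_le hK.bddBelow (mem_image_of_mem _ hu),
      hM ▸ le_csSup hK.bddAbove (mem_image_of_mem _ hu)⟩
  have hs' : s ∈ Icc 0 (S + T) := ⟨hs.1, by linarith [hs.2, hT]⟩
  have ht' : t ∈ Icc 0 (S + T) := ⟨ht.1, by linarith [ht.2, hS]⟩
  have hst' : s + t ∈ Icc 0 (S + T) := ⟨hst.le, add_le_add hs.2 ht.2⟩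
  have hlam_st : 0 < lam (s + t) :=
    (mul_pos (hgpos _ hst') hst).trans_le (mul_le_of_le_dslope_zero h0 hst.le le_rfl)
  refine ⟨integral_kernel_sum hlam hlam_st.ne', ?_, ?_⟩
  · have hlow : m₀ * (s + t) ≤ lam s + lam t := by
      linarith [mul_le_of_le_dslope_zero h0 hs.1 (hmem s hs').1,
        mul_le_of_le_dslope_zero h0 ht.1 (hmem t ht').1]
    have hhigh : 2 * lam (s + t) ≤ 2 * M * (s + t) := by
      linarith [le_mul_of_dslope_zero_le h0 hst.le (hmem _ hst').2]
    linarith [div_le_div_of_mul_le_of_le_mul hm₀pos.le (by positivity) hst hlow hhigh]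
  · linarith [div_pos hm₀pos (by linarith : 0 < 2 * M)]
end
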